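/- For every common schema there exists an equivalent ShEx schema, i.e., a ShEx schema S' such that for every common graph G, G is valid w.r.t. the common schema iff G is valid w.r.t. S'. -/

import Mathlib

/-! ### Common graphs -/

/-- Nodes. -/
abbrev GNode := ℕ
/-- Values. -/
abbrev GValue := ℕ
/-- Predicates. -/
abbrev GPred := ℕ
/-- Keys. -/
abbrev GKey := ℕ

/-- Nodes or values (the disjoint union 𝒩 ∪ 𝒱). -/
abbrev NV := GNode ⊕ GValue
/-- Predicates or keys (the disjoint union 𝒫 ∪ 𝒦). -/
abbrev PK := GPred ⊕ GKey

/-- Triples of a common graph: edges (𝒩×𝒫×𝒩) and properties (𝒩×𝒦×𝒱). -/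
inductive Triple : Type
  | edge (u : GNode) (p : GPred) (v : GNode)
  | prop (u : GNode) (k : GKey) (w : GValue)
  deriving DecidableEq

/-- A common graph: a finite set of triples such that for each node `u` and key `k`
there is at most one value `w` with `(u,k,w)` in the graph. -/
structure CommonGraph : Type where
  triples : Finset Triple
  functional : ∀ u k w w', Triple.prop u k w ∈ triples → Triple.prop u k w' ∈ triples → w = w'

/-- `(v, q, u) ∈ G`, viewed as a binary relation on `𝒩 ∪ 𝒱` for each `q ∈ 𝒫 ∪ 𝒦`. -/
def tripleRel (G : CommonGraph) : PK → NV → NV → Prop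
  | Sum.inl p, Sum.inl u, Sum.inl v => Triple.edge u p v ∈ G.triples
  | Sum.inr k, Sum.inl u, Sum.inr w => Triple.prop u k w ∈ G.triples
  | _, _, _ => False

/-- The nodes occurring in a common graph. -/
def nodesSet (G : CommonGraph) : Set GNode :=
  {u | (∃ p v, Triple.edge u p v ∈ G.triples) ∨ (∃ p v, Triple.edge v p u ∈ G.triples) ∨
       (∃ k w, Triple.prop u k w ∈ G.triples)}

/-- The values occurring in a common graph. -/
def valuesSet (G : CommonGraph) : Set GValue :=
  {w | ∃ u k, Triple.prop u k w ∈ G.triples}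

/-- `v ∈ Nodes(G) ∪ Values(G)`. -/
def inGraph (G : CommonGraph) : NV → Prop
  | Sum.inl u => u ∈ nodesSet G
  | Sum.inr w => w ∈ valuesSet G

/-- The content `ρ(u)` of a node: the record `{(k,w) | ρ(u,k) = w}`. -/
def content (G : CommonGraph) (u : GNode) : Set (GKey × GValue) :=
  {kw | Triple.prop u kw.1 kw.2 ∈ G.triples}

/-! ### Records and content types -/

/-- A record: a functional, finite set of key–value pairs
(a finite-domain partial function `𝒦 ⇀ 𝒱`). -/
def IsRecord (r : Set (GKey × GValue)) : Prop :=
  r.Finite ∧ ∀ k w w', (k, w) ∈ r → (k, w') ∈ r → w = w'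

/-- Content types `θ ::= ⊤ | {} | {k:τ} | θ&θ | θ|θ`. -/
inductive CType (VT : Type) : Type
  | top
  | emp
  | single (k : GKey) (τ : VT)
  | band (θ₁ θ₂ : CType VT)
  | bor (θ₁ θ₂ : CType VT)

/-- The semantics `⟦θ⟧` of a content type: a set of records. -/
def ctSem {VT : Type} (semVT : VT → Set GValue) : CType VT → Set (Set (GKey × GValue))
  | .top => {r | IsRecord r}
  | .emp => {(∅ : Set (GKey × GValue))}
  | .single k τ => {r | ∃ w ∈ semVT τ, r = {(k, w)}}
  | .band θ₁ θ₂ => {r | IsRecord r ∧ ∃ r₁ ∈ ctSem semVT θ₁, ∃ r₂ ∈ ctSem semVT θ₂, r = r₁ ∪ r₂}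
  | .bor θ₁ θ₂ => ctSem semVT θ₁ ∪ ctSem semVT θ₂

/-- Closed content types `ν ::= {} | {k:τ} | ν&ν | ν|ν`. -/
inductive CCType (VT : Type) : Type
  | emp
  | single (k : GKey) (τ : VT)
  | band (ν₁ ν₂ : CCType VT)
  | bor (ν₁ ν₂ : CCType VT)

/-- A closed content type is in particular a content type. -/
def CCType.toCT {VT : Type} : CCType VT → CType VT
  | .emp => .emp
  | .single k τ => .single k τ
  | .band ν₁ ν₂ => .band ν₁.toCT ν₂.toCT
  | .bor ν₁ ν₂ => .bor ν₁.toCT ν₂.toCT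

/-- Open content types: `⊤` or `ν & ⊤` with `ν` closed. -/
inductive OpenCT (VT : Type) : Type
  | top
  | opn (ν : CCType VT)

/-- An open content type as a content type. -/
def OpenCT.toCT {VT : Type} : OpenCT VT → CType VT
  | .top => .top
  | .opn ν => .band ν.toCT .top

/-! ### ShEx -/

/-- Possibly marked triples `(v, q, v')` / `(v, q⁻, v')` (with `inv = true` for marked). -/
structure STriple : Type where
  src : NV
  sym : PK
  inv : Bool
  tgt : NV
  deriving DecidableEq

/-- Well-typedness of a possibly marked triple, i.e. membership in `ℰ ∪ ℰ⁻` where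
`ℰ = 𝒩×𝒫×𝒩 ∪ 𝒩×𝒦×𝒱` and `ℰ⁻ = 𝒩×𝒫⁻×𝒩 ∪ 𝒱×𝒦⁻×𝒩`. -/
def STriple.wellTyped : STriple → Prop
  | ⟨a, Sum.inl _, false, b⟩ => (∃ u, a = Sum.inl u) ∧ (∃ v, b = Sum.inl v)
  | ⟨a, Sum.inr _, false, b⟩ => (∃ u, a = Sum.inl u) ∧ (∃ w, b = Sum.inr w)
  | ⟨a, Sum.inl _, true, b⟩ => (∃ u, a = Sum.inl u) ∧ (∃ v, b = Sum.inl v)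
  | ⟨a, Sum.inr _, true, b⟩ => (∃ w, a = Sum.inr w) ∧ (∃ v, b = Sum.inl v)

/-- The signed neighbourhood `Neigh±_G(v)`. -/
def neighPM (G : CommonGraph) (v : NV) : Set STriple :=
  {t | (t.inv = false ∧ t.src = v ∧ tripleRel G t.sym v t.tgt) ∨
       (t.inv = true ∧ t.src = v ∧ tripleRel G t.sym t.tgt v)}

mutual
/-- ShEx shapes. -/
inductive ShExShape (VT : Type) : Type
  | testC (c : GValue)
  | testT (τ : VT)
  /-- the half-open form `⟨e ; (¬R⁻)*⟩` -/
  | neighHalf (e : TExpr VT) (R : Finset PK)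
  /-- the open form `⟨e ; (¬R⁻)* ; (¬Q)*⟩` -/
  | neighOpen (e : TExpr VT) (R : Finset PK) (Q : Finset PK)
  | and (φ₁ φ₂ : ShExShape VT)
  | or (φ₁ φ₂ : ShExShape VT)
  | not (φ : ShExShape VT)

/-- ShEx closed triple expressions. -/
inductive TExpr (VT : Type) : Type
  | eps
  | fwd (q : PK) (φ : ShExShape VT)
  | bwd (q : PK) (φ : ShExShape VT)
  | seq (e₁ e₂ : TExpr VT)
  | alt (e₁ e₂ : TExpr VT)
  | star (e : TExpr VT)
end

/-- `⟦e₁ ; e₂⟧`: disjoint unions. -/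
def seqSem (A B : Set (Set STriple)) : Set (Set STriple) :=
  {T | ∃ T₁ ∈ A, ∃ T₂ ∈ B, T₁ ∩ T₂ = ∅ ∧ T = T₁ ∪ T₂}

/-- `⟦e*⟧`: finite unions of pairwise disjoint members (the empty union included). -/
def starSem (A : Set (Set STriple)) : Set (Set STriple) :=
  {T | ∃ l : List (Set STriple), (∀ X ∈ l, X ∈ A) ∧
        l.Pairwise (fun X Y => X ∩ Y = ∅) ∧ T = l.foldr (· ∪ ·) ∅}

/-- `⟦¬Q⟧` (for `b = false`) resp. `⟦¬Q⁻⟧` (for `b = true`) at focus `v`: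
all singletons of (well-typed) unmarked resp. marked triples with symbol outside `Q`. -/
def negSem (v : NV) (Q : Finset PK) (b : Bool) : Set (Set STriple) :=
  {T | ∃ t : STriple, t.wellTyped ∧ t.src = v ∧ t.inv = b ∧ t.sym ∉ Q ∧ T = {t}}

mutual
/-- Satisfaction of ShEx shapes: `G, v ⊨ φ`. -/
def shexSat {VT : Type} (semVT : VT → Set GValue) (G : CommonGraph) : NV → ShExShape VT → Prop
  | v, .testC c => v = Sum.inr c
  | v, .testT τ => ∃ w, v = Sum.inr w ∧ w ∈ semVT τ
  | v, .neighHalf e R =>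
      neighPM G v ∈ seqSem (teSem semVT G v e) (starSem (negSem v R true))
  | v, .neighOpen e R Q =>
      neighPM G v ∈
        seqSem (seqSem (teSem semVT G v e) (starSem (negSem v R true))) (starSem (negSem v Q false))
  | v, .and φ₁ φ₂ => shexSat semVT G v φ₁ ∧ shexSat semVT G v φ₂
  | v, .or φ₁ φ₂ => shexSat semVT G v φ₁ ∨ shexSat semVT G v φ₂
  | v, .not φ => ¬ shexSat semVT G v φ

/-- The semantics `⟦e⟧_v^G` of closed triple expressions. -/
def teSem {VT : Type} (semVT : VT → Set GValue) (G : CommonGraph) : NV → TExpr VT → Set (Set STriple)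
  | _, .eps => {(∅ : Set STriple)}
  | v, .fwd q φ =>
      {T | ∃ t : STriple, t.wellTyped ∧ t.src = v ∧ t.sym = q ∧ t.inv = false ∧
            shexSat semVT G t.tgt φ ∧ T = {t}}
  | v, .bwd q φ =>
      {T | ∃ t : STriple, t.wellTyped ∧ t.src = v ∧ t.sym = q ∧ t.inv = true ∧
            shexSat semVT G t.tgt φ ∧ T = {t}}
  | v, .seq e₁ e₂ => seqSem (teSem semVT G v e₁) (teSem semVT G v e₂)
  | v, .alt e₁ e₂ => teSem semVT G v e₁ ∪ teSem semVT G v e₂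
  | v, .star e => starSem (teSem semVT G v e)
end

/-- The open triple expression `⊤ = ε ; (¬∅⁻)* ; (¬∅)*` as a shape. -/
def shexTop {VT : Type} : ShExShape VT := .neighOpen .eps ∅ ∅

/-- ShEx selectors: `test(c)`, `⟨q.test(c) ; ⊤⟩`, `⟨q.⟨⊤⟩ ; ⊤⟩`, `⟨q⁻.⟨⊤⟩ ; ⊤⟩`. -/
def IsShExSelector {VT : Type} (φ : ShExShape VT) : Prop :=
  (∃ c, φ = ShExShape.testC c) ∨
  (∃ q c, φ = ShExShape.neighOpen (TExpr.fwd q (ShExShape.testC c)) ∅ ∅) ∨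
  (∃ q, φ = ShExShape.neighOpen (TExpr.fwd q shexTop) ∅ ∅) ∨
  (∃ q, φ = ShExShape.neighOpen (TExpr.bwd q shexTop) ∅ ∅)

/-- A ShEx schema: a finite set of selector–shape pairs. -/
structure ShExSchema (VT : Type) : Type where
  pairs : Finset (ShExShape VT × ShExShape VT)
  sel : ∀ pr ∈ pairs, IsShExSelector pr.1

/-- Validity of a common graph w.r.t. a ShEx schema. -/
def shexValid {VT : Type} (semVT : VT → Set GValue) (S : ShExSchema VT) (G : CommonGraph) : Prop :=
  ∀ v : NV, ∀ pr ∈ S.pairs, shexSat semVT G v pr.1 → shexSat semVT G v pr.2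

/-! ### CoGSL filters -/

/-- Filters `π₀ ::= (k:c) | ¬(k:c) | ν&⊤ | ¬(ν&⊤) | π₀·π₀` (with `ν` a closed content type). -/
inductive GFilter (VT : Type) : Type
  | keyIs (k : GKey) (c : GValue)
  | keyIsNot (k : GKey) (c : GValue)
  | openCT (ν : CCType VT)
  | notOpenCT (ν : CCType VT)
  | comp (f₁ f₂ : GFilter VT)

/-- The semantics `⟦π₀⟧^G` of a filter, as a binary relation on `𝒩 ∪ 𝒱`. -/
def cfilterSem {VT : Type} (semVT : VT → Set GValue) (G : CommonGraph) :
    GFilter VT → NV → NV → Prop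
  | .keyIs k c => fun a b =>
      a = b ∧ ∃ u, a = Sum.inl u ∧ u ∈ nodesSet G ∧ Triple.prop u k c ∈ G.triples
  | .keyIsNot k c => fun a b =>
      a = b ∧ ∃ u, a = Sum.inl u ∧ u ∈ nodesSet G ∧ Triple.prop u k c ∉ G.triples
  | .openCT ν => fun a b =>
      a = b ∧ ∃ u, a = Sum.inl u ∧ u ∈ nodesSet G ∧
        content G u ∈ ctSem semVT (CType.band ν.toCT CType.top)
  | .notOpenCT ν => fun a b =>
      a = b ∧ ∃ u, a = Sum.inl u ∧ u ∈ nodesSet G ∧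
        content G u ∉ ctSem semVT (CType.band ν.toCT CType.top)
  | .comp f₁ f₂ => fun a b => ∃ c, cfilterSem semVT G f₁ a c ∧ cfilterSem semVT G f₂ c b

/-! ### CoGSL paths, shapes, schemas -/

/-- The relation of a key step `k`: from a node `u` to the value `ρ(u,k)`. -/
def keyRel (G : CommonGraph) (k : GKey) : NV → NV → Prop
  | Sum.inl u, Sum.inr w => Triple.prop u k w ∈ G.triples
  | _, _ => False

/-- Star- and `¬P`-free PG-path expressions `π̄ ::= π₀ | p | π̄⁻ | π̄·π̄ | π̄∪π̄`. -/
inductive BPath (VT : Type) : Type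
  | filt (f : GFilter VT)
  | pred (p : GPred)
  | inv (π : BPath VT)
  | comp (π₁ π₂ : BPath VT)
  | union (π₁ π₂ : BPath VT)

/-- The semantics of `π̄`. -/
def bpathSem {VT : Type} (semVT : VT → Set GValue) (G : CommonGraph) :
    BPath VT → NV → NV → Prop
  | .filt f => cfilterSem semVT G f
  | .pred p => tripleRel G (Sum.inl p)
  | .inv π => fun a b => bpathSem semVT G π b a
  | .comp π₁ π₂ => fun a b => ∃ c, bpathSem semVT G π₁ a c ∧ bpathSem semVT G π₂ c b
  | .union π₁ π₂ => fun a b => bpathSem semVT G π₁ a b ∨ bpathSem semVT G π₂ a b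

/-- CoGSL paths `π ::= π̄ | π̄·k | k⁻·π̄ | k⁻·π̄·k'` (together with the path `k`,
shorthand for `⊤·k`, needed for the selector `∃k`). -/
inductive CPath (VT : Type) : Type
  | base (π : BPath VT)
  | toKey (π : BPath VT) (k : GKey)
  | fromKey (k : GKey) (π : BPath VT)
  | between (k : GKey) (π : BPath VT) (k' : GKey)
  | keyOnly (k : GKey)

/-- The semantics of CoGSL paths. -/
def cpathSem {VT : Type} (semVT : VT → Set GValue) (G : CommonGraph) :
    CPath VT → NV → NV → Prop
  | .base π => bpathSem semVT G π
  | .toKey π k => fun a b => ∃ c, bpathSem semVT G π a c ∧ keyRel G k c b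
  | .fromKey k π => fun a b => ∃ c, keyRel G k c a ∧ bpathSem semVT G π c b
  | .between k π k' => fun a b => ∃ c c', keyRel G k c a ∧ bpathSem semVT G π c c' ∧ keyRel G k' c' b
  | .keyOnly k => keyRel G k

/-- Single-step paths `π₁ ::= π₀·p·π₀ | π₀·p⁻·π₀ | π₀·k | k⁻·π₀`. -/
inductive OnePath (VT : Type) : Type
  | fwd (f₁ : GFilter VT) (p : GPred) (f₂ : GFilter VT)
  | bwd (f₁ : GFilter VT) (p : GPred) (f₂ : GFilter VT)
  | toKey (f : GFilter VT) (k : GKey)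
  | fromKey (k : GKey) (f : GFilter VT)

/-- The semantics of single-step paths. -/
def onePathSem {VT : Type} (semVT : VT → Set GValue) (G : CommonGraph) :
    OnePath VT → NV → NV → Prop
  | .fwd f₁ p f₂ => fun a b => ∃ c c', cfilterSem semVT G f₁ a c ∧
      tripleRel G (Sum.inl p) c c' ∧ cfilterSem semVT G f₂ c' b
  | .bwd f₁ p f₂ => fun a b => ∃ c c', cfilterSem semVT G f₁ a c ∧
      tripleRel G (Sum.inl p) c' c ∧ cfilterSem semVT G f₂ c' b
  | .toKey f k => fun a b => ∃ c, cfilterSem semVT G f a c ∧ keyRel G k c b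
  | .fromKey k f => fun a b => ∃ c, keyRel G k c a ∧ cfilterSem semVT G f c b

/-- Common shapes `φ ::= ∃π | ∃^{≤n}π₁ | ∃^{≥n}π₁ | (∃ν ∧ ¬∃¬P) | φ∧φ`. -/
inductive CShape (VT : Type) : Type
  | exist (π : CPath VT)
  | atMost (n : ℕ) (π : OnePath VT)
  | atLeast (n : ℕ) (π : OnePath VT)
  | closedNode (ν : CCType VT) (P : Finset GPred)
  | and (φ₁ φ₂ : CShape VT)

/-- Satisfaction of common shapes: `G, v ⊨ φ`. -/
def cshapeSat {VT : Type} (semVT : VT → Set GValue) (G : CommonGraph) :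
    NV → CShape VT → Prop
  | v, .exist π => ∃ v', cpathSem semVT G π v v'
  | v, .atMost n π => {v' : NV | onePathSem semVT G π v v'}.encard ≤ (n : ℕ∞)
  | v, .atLeast n π => (n : ℕ∞) ≤ {v' : NV | onePathSem semVT G π v v'}.encard
  | v, .closedNode ν P =>
      (∃ u, v = Sum.inl u ∧ content G u ∈ ctSem semVT ν.toCT) ∧
      (∀ u p w, v = Sum.inl u → Triple.edge u p w ∈ G.triples → p ∈ P)
  | v, .and φ₁ φ₂ => cshapeSat semVT G v φ₁ ∧ cshapeSat semVT G v φ₂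

/-- `π` or `π·k'`, used in common selectors. -/
def CPath.ext {VT : Type} (π : BPath VT) : Option GKey → CPath VT
  | none => CPath.base π
  | some k' => CPath.toKey π k'

/-- Common selectors: common shapes of one of the forms
`∃k`, `∃p·π`, `∃p⁻·π`, `∃(k:c)·π`, `∃({k:τ}&⊤)·π`, `∃k⁻·π`,
where `π` is of the form `π̄` or `π̄·k'`. -/
def IsCommonSelector {VT : Type} (φ : CShape VT) : Prop :=
  (∃ k, φ = CShape.exist (CPath.keyOnly k)) ∨
  (∃ (p : GPred) (π : BPath VT) (k? : Option GKey),
      φ = CShape.exist (CPath.ext (BPath.comp (BPath.pred p) π) k?)) ∨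
  (∃ (p : GPred) (π : BPath VT) (k? : Option GKey),
      φ = CShape.exist (CPath.ext (BPath.comp (BPath.inv (BPath.pred p)) π) k?)) ∨
  (∃ (k : GKey) (c : GValue) (π : BPath VT) (k? : Option GKey),
      φ = CShape.exist (CPath.ext (BPath.comp (BPath.filt (GFilter.keyIs k c)) π) k?)) ∨
  (∃ (k : GKey) (τ : VT) (π : BPath VT) (k? : Option GKey),
      φ = CShape.exist (CPath.ext (BPath.comp (BPath.filt (GFilter.openCT (CCType.single k τ))) π) k?)) ∨
  (∃ (k : GKey) (π : BPath VT), φ = CShape.exist (CPath.fromKey k π)) ∨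
  (∃ (k : GKey) (π : BPath VT) (k' : GKey), φ = CShape.exist (CPath.between k π k'))

/-- A common schema: a finite set of selector–shape pairs. -/
structure CommonSchema (VT : Type) : Type where
  pairs : Finset (CShape VT × CShape VT)
  sel : ∀ pr ∈ pairs, IsCommonSelector pr.1

/-- Validity of a common graph w.r.t. a common schema. -/
def commonValid {VT : Type} (semVT : VT → Set GValue) (S : CommonSchema VT) (G : CommonGraph) : Prop :=
  ∀ v : NV, ∀ pr ∈ S.pairs, cshapeSat semVT G v pr.1 → cshapeSat semVT G v pr.2
/-! ### Part 1: basic lemmas -/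

section Basics
variable {VT : Type} (semVT : VT → Set GValue) (G : CommonGraph)

lemma tripleRel_pred_iff (p : GPred) (a b : NV) :
    tripleRel G (Sum.inl p) a b ↔ ∃ u v, a = Sum.inl u ∧ b = Sum.inl v ∧ Triple.edge u p v ∈ G.triples := by
  cases a <;> cases b <;> simp [tripleRel]

lemma tripleRel_key_iff (k : GKey) (a b : NV) :
    tripleRel G (Sum.inr k) a b ↔ ∃ u w, a = Sum.inl u ∧ b = Sum.inr w ∧ Triple.prop u k w ∈ G.triples := by
  cases a <;> cases b <;> simp [tripleRel]

/-- A node or value. -/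
def NodeOK (G : CommonGraph) (v : NV) : Prop := ∃ u, v = Sum.inl u ∧ u ∈ nodesSet G

lemma mem_neighPM_iff (v : NV) (t : STriple) :
    t ∈ neighPM G v ↔ ((t.inv = false ∧ t.src = v ∧ tripleRel G t.sym v t.tgt) ∨
       (t.inv = true ∧ t.src = v ∧ tripleRel G t.sym t.tgt v)) := Iff.rfl

lemma mem_neighPM_src {v : NV} {t : STriple} (h : t ∈ neighPM G v) : t.src = v := by
  rcases h with ⟨_, h, _⟩ | ⟨_, h, _⟩ <;> exact h

lemma mem_neighPM_wellTyped {v : NV} {t : STriple} (h : t ∈ neighPM G v) : t.wellTyped := by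
  obtain ⟨src, sym, inv, tgt⟩ := t
  rcases h with ⟨hb, hs, hr⟩ | ⟨hb, hs, hr⟩ <;> simp at hb hs <;> subst hb <;> subst hs <;>
    rcases sym with p | k <;> rcases src with u | w <;> cases tgt <;>
    simp_all [tripleRel, STriple.wellTyped]

lemma neighPM_finite (v : NV) : (neighPM G v).Finite := by
  have : neighPM G v ⊆
      (fun x : Triple × Bool =>
        match x with
        | (Triple.edge u p w, false) => STriple.mk (Sum.inl u) (Sum.inl p) false (Sum.inl w)
        | (Triple.edge u p w, true) => STriple.mk (Sum.inl w) (Sum.inl p) true (Sum.inl u)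
        | (Triple.prop u k w, false) => STriple.mk (Sum.inl u) (Sum.inr k) false (Sum.inr w)
        | (Triple.prop u k w, true) => STriple.mk (Sum.inr w) (Sum.inr k) true (Sum.inl u)) ''
        ((G.triples : Set Triple) ×ˢ (Set.univ : Set Bool)) := by
    rintro ⟨src, sym, inv, tgt⟩ h
    rcases h with ⟨hb, hs, hr⟩ | ⟨hb, hs, hr⟩ <;> simp at hb hs <;> subst hb <;> subst hs <;>
      rcases sym with p | k <;> rcases src with u | w <;> cases tgt <;>
      simp_all [tripleRel] <;>
      first
      | exact ⟨_, hr, Or.inl rfl⟩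
      | exact ⟨_, hr, Or.inr rfl⟩
  exact Set.Finite.subset (Set.Finite.image _ ((G.triples.finite_toSet).prod (Set.finite_univ))) this

lemma content_isRecord (u : GNode) : IsRecord (content G u) := by
  constructor
  · have : content G u ⊆ (fun t : Triple => match t with
      | Triple.prop _ k w => (k, w)
      | Triple.edge _ _ _ => (0, 0)) '' (G.triples : Set Triple) := by
      rintro ⟨k, w⟩ h
      exact ⟨Triple.prop u k w, h, rfl⟩
    exact Set.Finite.subset (Set.Finite.image _ G.triples.finite_toSet) this
  · intro k w w' h h'
    exact G.functional u k w w' h h'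

lemma IsRecord.subset {r r' : Set (GKey × GValue)} (h : IsRecord r) (hsub : r' ⊆ r) : IsRecord r' :=
  ⟨h.1.subset hsub, fun k w w' hw hw' => h.2 k w w' (hsub hw) (hsub hw')⟩

lemma bpathSem_nodes {π : BPath VT} {a b : NV} (h : bpathSem semVT G π a b) :
    NodeOK G a ∧ NodeOK G b := by
  induction π generalizing a b with
  | filt f =>
    induction f generalizing a b with
    | keyIs k c =>
      obtain ⟨hab, u, ha, hu, _⟩ := h
      exact ⟨⟨u, ha, hu⟩, hab ▸ ⟨u, ha, hu⟩⟩
    | keyIsNot k c =>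
      obtain ⟨hab, u, ha, hu, _⟩ := h
      exact ⟨⟨u, ha, hu⟩, hab ▸ ⟨u, ha, hu⟩⟩
    | openCT ν =>
      obtain ⟨hab, u, ha, hu, _⟩ := h
      exact ⟨⟨u, ha, hu⟩, hab ▸ ⟨u, ha, hu⟩⟩
    | notOpenCT ν =>
      obtain ⟨hab, u, ha, hu, _⟩ := h
      exact ⟨⟨u, ha, hu⟩, hab ▸ ⟨u, ha, hu⟩⟩
    | comp f₁ f₂ ih₁ ih₂ =>
      obtain ⟨c, h₁, h₂⟩ := h
      exact ⟨(ih₁ h₁).1, (ih₂ h₂).2⟩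
  | pred p =>
    simp only [bpathSem] at h
    rw [tripleRel_pred_iff] at h
    obtain ⟨u, w, ha, hb, hm⟩ := h
    exact ⟨⟨u, ha, Or.inl ⟨p, w, hm⟩⟩, ⟨w, hb, Or.inr (Or.inl ⟨p, u, hm⟩)⟩⟩
  | inv π ih => exact (ih h).symm
  | comp π₁ π₂ ih₁ ih₂ =>
    obtain ⟨c, h₁, h₂⟩ := h
    exact ⟨(ih₁ h₁).1, (ih₂ h₂).2⟩
  | union π₁ π₂ ih₁ ih₂ => rcases h with h | h; exacts [ih₁ h, ih₂ h]

lemma cfilterSem_partial_id {f : GFilter VT} {a b : NV} (h : cfilterSem semVT G f a b) :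
    a = b ∧ NodeOK G a := by
  induction f generalizing a b with
  | keyIs k c => obtain ⟨hab, u, ha, hu, _⟩ := h; exact ⟨hab, u, ha, hu⟩
  | keyIsNot k c => obtain ⟨hab, u, ha, hu, _⟩ := h; exact ⟨hab, u, ha, hu⟩
  | openCT ν => obtain ⟨hab, u, ha, hu, _⟩ := h; exact ⟨hab, u, ha, hu⟩
  | notOpenCT ν => obtain ⟨hab, u, ha, hu, _⟩ := h; exact ⟨hab, u, ha, hu⟩
  | comp f₁ f₂ ih₁ ih₂ =>
    obtain ⟨c, h₁, h₂⟩ := h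
    obtain ⟨e₁, n₁⟩ := ih₁ h₁
    obtain ⟨e₂, n₂⟩ := ih₂ h₂
    exact ⟨e₁.trans e₂, n₁⟩

end Basics
/-! ### Part 2: characterizations of ShEx semantics -/

section Char
variable {VT : Type} (semVT : VT → Set GValue) (G : CommonGraph)

lemma foldr_union_mem (l : List (Set STriple)) (t : STriple) :
    t ∈ l.foldr (· ∪ ·) ∅ ↔ ∃ X ∈ l, t ∈ X := by
  induction l with
  | nil => simp
  | cons X l ih => simp [List.foldr, ih]

lemma starSem_singletons {S : Set (Set STriple)} (hS : ∀ X ∈ S, ∃ t, X = {t}) (T : Set STriple) :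
    T ∈ starSem S ↔ T.Finite ∧ ∀ t ∈ T, {t} ∈ S := by
  constructor
  · rintro ⟨l, hmem, hpw, rfl⟩
    constructor
    · clear hpw
      induction l with
      | nil => simp
      | cons X l ih =>
        simp only [List.foldr]
        refine Set.Finite.union ?_ (ih (fun Y hY => hmem Y (List.mem_cons_of_mem _ hY)))
        obtain ⟨t, rfl⟩ := hS X (hmem X List.mem_cons_self)
        exact Set.finite_singleton t
    · intro t ht
      obtain ⟨X, hX, htX⟩ := (foldr_union_mem l t).1 ht
      obtain ⟨t', rfl⟩ := hS X (hmem X hX)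
      obtain rfl : t = t' := htX
      exact hmem _ hX
  · rintro ⟨hfin, h⟩
    refine ⟨hfin.toFinset.toList.map (fun t => {t}), ?_, ?_, ?_⟩
    · intro X hX
      simp only [List.mem_map] at hX
      obtain ⟨t, ht, rfl⟩ := hX
      exact h t (by simpa using ht)
    · refine List.Pairwise.map _ (fun a b (hab : a ≠ b) => ?_) hfin.toFinset.nodup_toList
      ext x; simp only [Set.mem_inter_iff, Set.mem_singleton_iff, Set.mem_empty_iff_false,
        iff_false, not_and]
      rintro rfl; exact hab
    · ext t
      rw [foldr_union_mem]
      simp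
  
lemma mem_starSem_negSem (v : NV) (Q : Finset PK) (b : Bool) (T : Set STriple) :
    T ∈ starSem (negSem v Q b) ↔
      T.Finite ∧ ∀ t ∈ T, t.wellTyped ∧ t.src = v ∧ t.inv = b ∧ t.sym ∉ Q := by
  rw [starSem_singletons (fun X hX => by obtain ⟨t, _, _, _, _, rfl⟩ := hX; exact ⟨t, rfl⟩)]
  refine and_congr_right fun _ => forall₂_congr fun t ht => ?_
  constructor
  · rintro ⟨t', h1, h2, h3, h4, h5⟩
    obtain rfl : t = t' := by
      have := Set.singleton_eq_singleton_iff.1 h5; exact this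
    exact ⟨h1, h2, h3, h4⟩
  · rintro ⟨h1, h2, h3, h4⟩
    exact ⟨t, h1, h2, h3, h4, rfl⟩

lemma shexSat_neighOpen_iff (e : TExpr VT) (v : NV) :
    shexSat semVT G v (.neighOpen e ∅ ∅) ↔ ∃ T ∈ teSem semVT G v e, T ⊆ neighPM G v := by
  simp only [shexSat]
  constructor
  · rintro ⟨T₁₂, ⟨T₁, h₁, T₂, h₂, hd, rfl⟩, T₃, h₃, hd', hEq⟩
    exact ⟨T₁, h₁, fun t ht => hEq ▸ Or.inl (Or.inl ht)⟩
  · rintro ⟨T, hT, hsub⟩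
    set N := neighPM G v with hN
    have hNfin : N.Finite := neighPM_finite G v
    have hNwt : ∀ t ∈ N, t.wellTyped := fun t ht => mem_neighPM_wellTyped G ht
    have hNsrc : ∀ t ∈ N, t.src = v := fun t ht => mem_neighPM_src G ht
    clear_value N
    refine ⟨T ∪ {t ∈ N | t ∉ T ∧ t.inv = true},
      ⟨T, hT, {t ∈ N | t ∉ T ∧ t.inv = true}, ?_, ?_, rfl⟩,
      {t ∈ N | t ∉ T ∧ t.inv = false}, ?_, ?_, ?_⟩
    · rw [mem_starSem_negSem]
      refine ⟨hNfin.subset (fun t ht => ht.1), ?_⟩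
      rintro t ⟨ht, _, hb⟩
      exact ⟨hNwt t ht, hNsrc t ht, hb, by simp⟩
    · ext t
      simp only [Set.mem_inter_iff, Set.mem_setOf_eq, Set.mem_empty_iff_false, iff_false]
      tauto
    · rw [mem_starSem_negSem]
      refine ⟨hNfin.subset (fun t ht => ht.1), ?_⟩
      rintro t ⟨ht, _, hb⟩
      exact ⟨hNwt t ht, hNsrc t ht, hb, by simp⟩
    · ext t
      simp only [Set.mem_inter_iff, Set.mem_union, Set.mem_setOf_eq, Set.mem_empty_iff_false,
        iff_false]
      rintro ⟨h | ⟨_, _, h⟩, _, _, h'⟩ <;> simp_all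
    · ext t
      simp only [Set.mem_union, Set.mem_setOf_eq]
      constructor
      · intro ht
        by_cases hT' : t ∈ T
        · exact Or.inl (Or.inl hT')
        · by_cases hb : t.inv = true
          · exact Or.inl (Or.inr ⟨ht, hT', hb⟩)
          · exact Or.inr ⟨ht, hT', by simpa using hb⟩
      · rintro ((h | ⟨h, _⟩) | ⟨h, _⟩)
        exacts [hsub h, h, h]

lemma shexSat_neighHalf_iff (e : TExpr VT) (R : Finset PK) (v : NV) :
    shexSat semVT G v (.neighHalf e R) ↔
      ∃ T ∈ teSem semVT G v e, T ⊆ neighPM G v ∧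
        ∀ t ∈ neighPM G v, t ∉ T → t.inv = true ∧ t.sym ∉ R := by
  simp only [shexSat]
  constructor
  · rintro ⟨T₁, h₁, T₂, h₂, hd, hEq⟩
    rw [mem_starSem_negSem] at h₂
    refine ⟨T₁, h₁, fun t ht => hEq ▸ Or.inl ht, ?_⟩
    intro t ht htn
    have h2 : t ∈ T₂ := by
      have h' := hEq ▸ ht
      rcases h' with h | h
      · exact absurd h htn
      · exact h
    exact ⟨(h₂.2 t h2).2.2.1, (h₂.2 t h2).2.2.2⟩
  · rintro ⟨T, hT, hsub, hrest⟩
    set N := neighPM G v with hN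
    have hNfin : N.Finite := neighPM_finite G v
    have hNwt : ∀ t ∈ N, t.wellTyped := fun t ht => mem_neighPM_wellTyped G ht
    have hNsrc : ∀ t ∈ N, t.src = v := fun t ht => mem_neighPM_src G ht
    clear_value N
    refine ⟨T, hT, {t ∈ N | t ∉ T}, ?_, ?_, ?_⟩
    · rw [mem_starSem_negSem]
      refine ⟨hNfin.subset (fun t ht => ht.1), ?_⟩
      rintro t ⟨ht, htn⟩
      exact ⟨hNwt t ht, hNsrc t ht, (hrest t ht htn).1, (hrest t ht htn).2⟩
    · ext t
      simp only [Set.mem_inter_iff, Set.mem_setOf_eq, Set.mem_empty_iff_false, iff_false]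
      tauto
    · ext t
      simp only [Set.mem_union, Set.mem_setOf_eq]
      constructor
      · intro ht
        by_cases hT' : t ∈ T
        · exact Or.inl hT'
        · exact Or.inr ⟨ht, hT'⟩
      · rintro (h | ⟨h, _⟩); exacts [hsub h, h]

end Char
/-! ### Part 3: basic translated shapes -/

def sTrue {VT : Type} : ShExShape VT := shexTop
def sFalse {VT : Type} : ShExShape VT := .not shexTop
def one {VT : Type} (q : PK) (ψ : ShExShape VT) : ShExShape VT := .neighOpen (.fwd q ψ) ∅ ∅
def oneB {VT : Type} (q : PK) (ψ : ShExShape VT) : ShExShape VT := .neighOpen (.bwd q ψ) ∅ ∅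
def hasKey {VT : Type} (k : GKey) : ShExShape VT := one (Sum.inr k) sTrue
def keyIsSh {VT : Type} (k : GKey) (c : GValue) : ShExShape VT := one (Sum.inr k) (.testC c)
def keyTypeSh {VT : Type} (k : GKey) (τ : VT) : ShExShape VT := one (Sum.inr k) (.testT τ)

section Shapes
variable {VT : Type} (semVT : VT → Set GValue) (G : CommonGraph)

lemma mem_neighPM_of_false {t : STriple} {v : NV} (ht : t ∈ neighPM G v) (h : t.inv = false) :
    tripleRel G t.sym v t.tgt := by
  rcases ht with ⟨_, _, hr⟩ | ⟨hb, _, _⟩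
  · exact hr
  · rw [hb] at h; exact absurd h (by simp)

lemma mem_neighPM_of_true {t : STriple} {v : NV} (ht : t ∈ neighPM G v) (h : t.inv = true) :
    tripleRel G t.sym t.tgt v := by
  rcases ht with ⟨hb, _, _⟩ | ⟨_, _, hr⟩
  · rw [hb] at h; exact absurd h (by simp)
  · exact hr

lemma mk_mem_neighPM_false {q : PK} {v b : NV} (h : tripleRel G q v b) :
    (⟨v, q, false, b⟩ : STriple) ∈ neighPM G v := Or.inl ⟨rfl, rfl, h⟩

lemma mk_mem_neighPM_true {q : PK} {v b : NV} (h : tripleRel G q b v) :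
    (⟨v, q, true, b⟩ : STriple) ∈ neighPM G v := Or.inr ⟨rfl, rfl, h⟩

lemma sTrue_sat (v : NV) : shexSat semVT G v sTrue := by
  rw [sTrue, shexTop, shexSat_neighOpen_iff]
  exact ⟨∅, rfl, Set.empty_subset _⟩

lemma sFalse_not_sat (v : NV) : ¬ shexSat semVT G v sFalse := by
  rw [sFalse]
  simp only [shexSat, not_not]
  exact sTrue_sat semVT G v

lemma one_sat_iff (q : PK) (ψ : ShExShape VT) (v : NV) :
    shexSat semVT G v (one q ψ) ↔
      ∃ t ∈ neighPM G v, t.inv = false ∧ t.sym = q ∧ shexSat semVT G t.tgt ψ := by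
  rw [one, shexSat_neighOpen_iff]
  constructor
  · rintro ⟨T, ⟨t, hwt, hsrc, hsym, hinv, hψ, rfl⟩, hsub⟩
    exact ⟨t, hsub rfl, hinv, hsym, hψ⟩
  · rintro ⟨t, ht, hinv, hsym, hψ⟩
    exact ⟨{t}, ⟨t, mem_neighPM_wellTyped G ht, mem_neighPM_src G ht, hsym, hinv, hψ, rfl⟩,
      Set.singleton_subset_iff.2 ht⟩

lemma oneB_sat_iff (q : PK) (ψ : ShExShape VT) (v : NV) :
    shexSat semVT G v (oneB q ψ) ↔
      ∃ t ∈ neighPM G v, t.inv = true ∧ t.sym = q ∧ shexSat semVT G t.tgt ψ := by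
  rw [oneB, shexSat_neighOpen_iff]
  constructor
  · rintro ⟨T, ⟨t, hwt, hsrc, hsym, hinv, hψ, rfl⟩, hsub⟩
    exact ⟨t, hsub rfl, hinv, hsym, hψ⟩
  · rintro ⟨t, ht, hinv, hsym, hψ⟩
    exact ⟨{t}, ⟨t, mem_neighPM_wellTyped G ht, mem_neighPM_src G ht, hsym, hinv, hψ, rfl⟩,
      Set.singleton_subset_iff.2 ht⟩

lemma hasKey_iff (k : GKey) (v : NV) :
    shexSat semVT G v (hasKey k) ↔ ∃ u w, v = Sum.inl u ∧ Triple.prop u k w ∈ G.triples := by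
  rw [hasKey, one_sat_iff]
  constructor
  · rintro ⟨t, ht, hinv, hsym, -⟩
    have hr := mem_neighPM_of_false G ht hinv
    rw [hsym, tripleRel_key_iff] at hr
    obtain ⟨u, w, hv, -, hm⟩ := hr
    exact ⟨u, w, hv, hm⟩
  · rintro ⟨u, w, rfl, hm⟩
    exact ⟨⟨Sum.inl u, Sum.inr k, false, Sum.inr w⟩, mk_mem_neighPM_false G hm, rfl, rfl,
      sTrue_sat semVT G _⟩

lemma keyIsSh_iff (k : GKey) (c : GValue) (v : NV) :
    shexSat semVT G v (keyIsSh k c) ↔ ∃ u, v = Sum.inl u ∧ Triple.prop u k c ∈ G.triples := by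
  rw [keyIsSh, one_sat_iff]
  constructor
  · rintro ⟨t, ht, hinv, hsym, hψ⟩
    have hr := mem_neighPM_of_false G ht hinv
    have htgt : t.tgt = Sum.inr c := hψ
    rw [hsym, tripleRel_key_iff] at hr
    obtain ⟨u, w, hv, hw, hm⟩ := hr
    rw [htgt] at hw
    obtain rfl : w = c := by simpa using hw.symm
    exact ⟨u, hv, hm⟩
  · rintro ⟨u, rfl, hm⟩
    exact ⟨⟨Sum.inl u, Sum.inr k, false, Sum.inr c⟩, mk_mem_neighPM_false G hm, rfl, rfl, rfl⟩

lemma keyTypeSh_iff (k : GKey) (τ : VT) (v : NV) :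
    shexSat semVT G v (keyTypeSh k τ) ↔
      ∃ u w, v = Sum.inl u ∧ Triple.prop u k w ∈ G.triples ∧ w ∈ semVT τ := by
  rw [keyTypeSh, one_sat_iff]
  constructor
  · rintro ⟨t, ht, hinv, hsym, hψ⟩
    have hr := mem_neighPM_of_false G ht hinv
    obtain ⟨w', htgt, hτ⟩ : ∃ w', t.tgt = Sum.inr w' ∧ w' ∈ semVT τ := hψ
    rw [hsym, tripleRel_key_iff] at hr
    obtain ⟨u, w, hv, hw, hm⟩ := hr
    rw [htgt] at hw
    obtain rfl : w = w' := by simpa using hw.symm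
    exact ⟨u, w, hv, hm, hτ⟩
  · rintro ⟨u, w, rfl, hm, hτ⟩
    exact ⟨⟨Sum.inl u, Sum.inr k, false, Sum.inr w⟩, mk_mem_neighPM_false G hm, rfl, rfl,
      ⟨w, rfl, hτ⟩⟩

end Shapes
/-! ### Part 4: filters and paths -/

def Osh {VT : Type} : CCType VT → ShExShape VT
  | .emp => sTrue
  | .single k τ => keyTypeSh k τ
  | .band ν₁ ν₂ => .and (Osh ν₁) (Osh ν₂)
  | .bor ν₁ ν₂ => .or (Osh ν₁) (Osh ν₂)

def Fsh {VT : Type} : GFilter VT → ShExShape VT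
  | .keyIs k c => keyIsSh k c
  | .keyIsNot k c => .not (keyIsSh k c)
  | .openCT ν => Osh ν
  | .notOpenCT ν => .not (Osh ν)
  | .comp f₁ f₂ => .and (Fsh f₁) (Fsh f₂)

def Esh {VT : Type} : BPath VT → Bool → ShExShape VT → ShExShape VT
  | .filt f, _, ψ => .and (Fsh f) ψ
  | .pred p, false, ψ => one (Sum.inl p) ψ
  | .pred p, true, ψ => oneB (Sum.inl p) ψ
  | .inv π, b, ψ => Esh π (!b) ψ
  | .comp π₁ π₂, false, ψ => Esh π₁ false (Esh π₂ false ψ)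
  | .comp π₁ π₂, true, ψ => Esh π₂ true (Esh π₁ true ψ)
  | .union π₁ π₂, b, ψ => .or (Esh π₁ b ψ) (Esh π₂ b ψ)

/-- Directed relation: `b = true` means look backwards. -/
def dirSem (R : NV → NV → Prop) : Bool → NV → NV → Prop
  | false, x, y => R x y
  | true, x, y => R y x

section FP
variable {VT : Type} (semVT : VT → Set GValue) (G : CommonGraph)

lemma Osh_iff (ν : CCType VT) (u : GNode) :
    shexSat semVT G (Sum.inl u) (Osh ν) ↔ ∃ r ∈ ctSem semVT ν.toCT, r ⊆ content G u := by
  induction ν with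
  | emp =>
    simp only [Osh, CCType.toCT]
    refine iff_of_true (sTrue_sat semVT G _) ⟨∅, rfl, Set.empty_subset _⟩
  | single k τ =>
    simp only [Osh, CCType.toCT]
    rw [keyTypeSh_iff]
    constructor
    · rintro ⟨u', w, hu, hm, hτ⟩
      obtain rfl : u = u' := by simpa using hu
      exact ⟨{(k, w)}, ⟨w, hτ, rfl⟩, Set.singleton_subset_iff.2 hm⟩
    · rintro ⟨r, ⟨w, hτ, rfl⟩, hsub⟩
      exact ⟨u, w, rfl, hsub rfl, hτ⟩
  | band ν₁ ν₂ ih₁ ih₂ =>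
    simp only [Osh, CCType.toCT, shexSat, ih₁, ih₂]
    constructor
    · rintro ⟨⟨r₁, h₁, hs₁⟩, ⟨r₂, h₂, hs₂⟩⟩
      refine ⟨r₁ ∪ r₂, ⟨(content_isRecord G u).subset (Set.union_subset hs₁ hs₂),
        r₁, h₁, r₂, h₂, rfl⟩, Set.union_subset hs₁ hs₂⟩
    · rintro ⟨r, ⟨hrec, r₁, h₁, r₂, h₂, rfl⟩, hsub⟩
      exact ⟨⟨r₁, h₁, (Set.subset_union_left).trans hsub⟩,
        ⟨r₂, h₂, (Set.subset_union_right).trans hsub⟩⟩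
  | bor ν₁ ν₂ ih₁ ih₂ =>
    simp only [Osh, CCType.toCT, shexSat, ih₁, ih₂]
    constructor
    · rintro (⟨r, h, hs⟩ | ⟨r, h, hs⟩)
      · exact ⟨r, Or.inl h, hs⟩
      · exact ⟨r, Or.inr h, hs⟩
    · rintro ⟨r, h | h, hs⟩
      · exact Or.inl ⟨r, h, hs⟩
      · exact Or.inr ⟨r, h, hs⟩

lemma openCT_sem_iff (ν : CCType VT) (u : GNode) :
    content G u ∈ ctSem semVT (CType.band ν.toCT CType.top) ↔
      ∃ r ∈ ctSem semVT ν.toCT, r ⊆ content G u := by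
  constructor
  · rintro ⟨hrec, r₁, h₁, r₂, h₂, heq⟩
    exact ⟨r₁, h₁, heq ▸ Set.subset_union_left⟩
  · rintro ⟨r, hr, hsub⟩
    exact ⟨content_isRecord G u, r, hr, content G u, content_isRecord G u,
      (Set.union_eq_self_of_subset_left hsub).symm⟩

lemma Fsh_iff (f : GFilter VT) (v : NV) (hv : NodeOK G v) :
    shexSat semVT G v (Fsh f) ↔ cfilterSem semVT G f v v := by
  obtain ⟨u, rfl, hu⟩ := hv
  induction f with
  | keyIs k c =>
    rw [show Fsh (GFilter.keyIs k c) = keyIsSh (VT := VT) k c from rfl, keyIsSh_iff]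
    constructor
    · rintro ⟨u', hu', hm⟩
      obtain rfl : u = u' := by simpa using hu'
      exact ⟨rfl, u, rfl, hu, hm⟩
    · rintro ⟨-, u', hu', -, hm⟩
      obtain rfl : u = u' := by simpa using hu'
      exact ⟨u, rfl, hm⟩
  | keyIsNot k c =>
    rw [show Fsh (GFilter.keyIsNot k c) = ShExShape.not (keyIsSh (VT := VT) k c) from rfl,
      show (shexSat semVT G (Sum.inl u) (ShExShape.not (keyIsSh k c)) ↔
        ¬ shexSat semVT G (Sum.inl u) (keyIsSh k c)) from Iff.rfl, keyIsSh_iff]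
    constructor
    · intro h
      exact ⟨rfl, u, rfl, hu, fun hm => h ⟨u, rfl, hm⟩⟩
    · rintro ⟨-, u', hu', -, hm⟩ ⟨u'', hu'', hm'⟩
      obtain rfl : u = u' := by simpa using hu'
      obtain rfl : u = u'' := by simpa using hu''
      exact hm hm'
  | openCT ν =>
    rw [show Fsh (GFilter.openCT ν) = Osh ν from rfl, Osh_iff, ← openCT_sem_iff]
    constructor
    · intro h; exact ⟨rfl, u, rfl, hu, h⟩
    · rintro ⟨-, u', hu', -, h⟩
      obtain rfl : u = u' := by simpa using hu'
      exact h
  | notOpenCT ν =>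
    rw [show Fsh (GFilter.notOpenCT ν) = ShExShape.not (Osh ν) from rfl,
      show (shexSat semVT G (Sum.inl u) (ShExShape.not (Osh ν)) ↔
        ¬ shexSat semVT G (Sum.inl u) (Osh ν)) from Iff.rfl, Osh_iff, ← openCT_sem_iff]
    constructor
    · intro h; exact ⟨rfl, u, rfl, hu, h⟩
    · rintro ⟨-, u', hu', -, h⟩
      obtain rfl : u = u' := by simpa using hu'
      exact h
  | comp f₁ f₂ ih₁ ih₂ =>
    rw [show Fsh (GFilter.comp f₁ f₂) = ShExShape.and (Fsh f₁) (Fsh f₂) from rfl]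
    simp only [shexSat]
    rw [ih₁, ih₂]
    constructor
    · rintro ⟨h₁, h₂⟩
      exact ⟨Sum.inl u, h₁, h₂⟩
    · rintro ⟨c, h₁, h₂⟩
      obtain ⟨rfl, -⟩ := cfilterSem_partial_id semVT G h₁
      exact ⟨h₁, h₂⟩

lemma Esh_iff (π : BPath VT) (b : Bool) (ψ : ShExShape VT) (Ψ : NV → Prop)
    (hψ : ∀ x, NodeOK G x → (shexSat semVT G x ψ ↔ Ψ x)) (v : NV) (hv : NodeOK G v) :
    shexSat semVT G v (Esh π b ψ) ↔
      ∃ y, dirSem (bpathSem semVT G π) b v y ∧ Ψ y := by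
  induction π generalizing b ψ Ψ v with
  | filt f =>
    have he : Esh (BPath.filt f) b ψ = .and (Fsh f) ψ := by cases b <;> rfl
    rw [he]
    simp only [shexSat]
    rw [Fsh_iff semVT G f v hv, hψ v hv]
    cases b <;> simp only [dirSem] <;> constructor
    · rintro ⟨h₁, h₂⟩; exact ⟨v, h₁, h₂⟩
    · rintro ⟨y, h₁, h₂⟩
      obtain ⟨heq, -⟩ := cfilterSem_partial_id semVT G h₁
      subst heq; exact ⟨h₁, h₂⟩
    · rintro ⟨h₁, h₂⟩; exact ⟨v, h₁, h₂⟩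
    · rintro ⟨y, h₁, h₂⟩
      obtain ⟨heq, -⟩ := cfilterSem_partial_id semVT G h₁
      subst heq; exact ⟨h₁, h₂⟩
  | pred p =>
    cases b
    · rw [show Esh (BPath.pred p) false ψ = one (Sum.inl p) ψ from rfl, one_sat_iff]
      simp only [dirSem, bpathSem]
      constructor
      · rintro ⟨t, ht, hinv, hsym, hψ'⟩
        have hr := mem_neighPM_of_false G ht hinv
        rw [hsym] at hr
        have hr' := hr
        rw [tripleRel_pred_iff] at hr'
        obtain ⟨u, c, hvv, htgt, hm⟩ := hr'
        have hnode : NodeOK G t.tgt := ⟨c, htgt, Or.inr (Or.inl ⟨p, u, hm⟩)⟩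
        exact ⟨t.tgt, hr, (hψ t.tgt hnode).1 hψ'⟩
      · rintro ⟨y, hr, hΨ⟩
        have hr' := hr
        rw [tripleRel_pred_iff] at hr'
        obtain ⟨u, c, hvv, hy, hm⟩ := hr'
        have hnode : NodeOK G y := ⟨c, hy, Or.inr (Or.inl ⟨p, u, hm⟩)⟩
        exact ⟨⟨v, Sum.inl p, false, y⟩, mk_mem_neighPM_false G hr, rfl, rfl,
          (hψ y hnode).2 hΨ⟩
    · rw [show Esh (BPath.pred p) true ψ = oneB (Sum.inl p) ψ from rfl, oneB_sat_iff]
      simp only [dirSem, bpathSem]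
      constructor
      · rintro ⟨t, ht, hinv, hsym, hψ'⟩
        have hr := mem_neighPM_of_true G ht hinv
        rw [hsym] at hr
        have hr' := hr
        rw [tripleRel_pred_iff] at hr'
        obtain ⟨u, c, htgt, hvv, hm⟩ := hr'
        have hnode : NodeOK G t.tgt := ⟨u, htgt, Or.inl ⟨p, c, hm⟩⟩
        exact ⟨t.tgt, hr, (hψ t.tgt hnode).1 hψ'⟩
      · rintro ⟨y, hr, hΨ⟩
        have hr' := hr
        rw [tripleRel_pred_iff] at hr'
        obtain ⟨u, c, hy, hvv, hm⟩ := hr'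
        have hnode : NodeOK G y := ⟨u, hy, Or.inl ⟨p, c, hm⟩⟩
        exact ⟨⟨v, Sum.inl p, true, y⟩, mk_mem_neighPM_true G hr, rfl, rfl,
          (hψ y hnode).2 hΨ⟩
  | inv π ih =>
    have he : Esh (BPath.inv π) b ψ = Esh π (!b) ψ := by cases b <;> rfl
    rw [he, ih (!b) ψ Ψ hψ v hv]
    cases b <;> simp only [dirSem, bpathSem, Bool.not_true, Bool.not_false]
  | comp π₁ π₂ ih₁ ih₂ =>
    cases b
    · have hinner : ∀ x, NodeOK G x → (shexSat semVT G x (Esh π₂ false ψ) ↔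
          ∃ z, bpathSem semVT G π₂ x z ∧ Ψ z) := by
        intro x hx
        rw [ih₂ false ψ Ψ hψ x hx]
        simp only [dirSem]
      rw [show Esh (BPath.comp π₁ π₂) false ψ = Esh π₁ false (Esh π₂ false ψ) from rfl,
        ih₁ false (Esh π₂ false ψ) _ hinner v hv]
      simp only [dirSem, bpathSem]
      constructor
      · rintro ⟨y, h₁, z, h₂, hΨ⟩
        exact ⟨z, ⟨y, h₁, h₂⟩, hΨ⟩
      · rintro ⟨z, ⟨y, h₁, h₂⟩, hΨ⟩
        exact ⟨y, h₁, z, h₂, hΨ⟩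
    · have hinner : ∀ x, NodeOK G x → (shexSat semVT G x (Esh π₁ true ψ) ↔
          ∃ z, bpathSem semVT G π₁ z x ∧ Ψ z) := by
        intro x hx
        rw [ih₁ true ψ Ψ hψ x hx]
        simp only [dirSem]
      rw [show Esh (BPath.comp π₁ π₂) true ψ = Esh π₂ true (Esh π₁ true ψ) from rfl,
        ih₂ true (Esh π₁ true ψ) _ hinner v hv]
      simp only [dirSem, bpathSem]
      constructor
      · rintro ⟨y, h₂, z, h₁, hΨ⟩
        exact ⟨z, ⟨y, h₁, h₂⟩, hΨ⟩
      · rintro ⟨z, ⟨y, h₁, h₂⟩, hΨ⟩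
        exact ⟨y, h₂, z, h₁, hΨ⟩
  | union π₁ π₂ ih₁ ih₂ =>
    have he : Esh (BPath.union π₁ π₂) b ψ = .or (Esh π₁ b ψ) (Esh π₂ b ψ) := by cases b <;> rfl
    rw [he]
    simp only [shexSat]
    rw [ih₁ b ψ Ψ hψ v hv, ih₂ b ψ Ψ hψ v hv]
    cases b <;> simp only [dirSem, bpathSem] <;> constructor
    · rintro (⟨y, h, hΨ⟩ | ⟨y, h, hΨ⟩)
      · exact ⟨y, Or.inl h, hΨ⟩
      · exact ⟨y, Or.inr h, hΨ⟩
    · rintro ⟨y, h | h, hΨ⟩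
      · exact Or.inl ⟨y, h, hΨ⟩
      · exact Or.inr ⟨y, h, hΨ⟩
    · rintro (⟨y, h, hΨ⟩ | ⟨y, h, hΨ⟩)
      · exact ⟨y, Or.inl h, hΨ⟩
      · exact ⟨y, Or.inr h, hΨ⟩
    · rintro ⟨y, h | h, hΨ⟩
      · exact Or.inl ⟨y, h, hΨ⟩
      · exact Or.inr ⟨y, h, hΨ⟩

end FP
/-! ### Part 5: counting -/

def powE {VT : Type} : ℕ → TExpr VT → TExpr VT
  | 0, _ => .eps
  | n+1, e => .seq e (powE n e)

def stepE {VT : Type} (b : Bool) (q : PK) (ψ : ShExShape VT) : TExpr VT :=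
  bif b then .bwd q ψ else .fwd q ψ

def cntSh {VT : Type} (n : ℕ) (b : Bool) (q : PK) (ψ : ShExShape VT) : ShExShape VT :=
  .neighOpen (powE n (stepE b q ψ)) ∅ ∅

section Count
variable {VT : Type} (semVT : VT → Set GValue) (G : CommonGraph)

/-- The triples in the neighbourhood matching a given symbol, direction, and target shape. -/
def matchSet (v : NV) (q : PK) (b : Bool) (ψ : ShExShape VT) : Set STriple :=
  {t | t ∈ neighPM G v ∧ t.sym = q ∧ t.inv = b ∧ shexSat semVT G t.tgt ψ}

lemma mem_teSem_stepE (b : Bool) (q : PK) (ψ : ShExShape VT) (v : NV) (T : Set STriple) :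
    T ∈ teSem semVT G v (stepE b q ψ) ↔
      ∃ t : STriple, t.wellTyped ∧ t.src = v ∧ t.sym = q ∧ t.inv = b ∧
        shexSat semVT G t.tgt ψ ∧ T = {t} := by
  cases b <;> exact Iff.rfl

lemma powE_char (n : ℕ) (b : Bool) (q : PK) (ψ : ShExShape VT) (v : NV) :
    (∃ T ∈ teSem semVT G v (powE n (stepE b q ψ)), T ⊆ neighPM G v) ↔
      (n : ℕ∞) ≤ (matchSet semVT G v q b ψ).encard := by
  constructor
  · rintro ⟨T, hT, hsub⟩
    suffices h : T ⊆ matchSet semVT G v q b ψ ∧ T.encard = n by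
      rw [← h.2]
      exact Set.encard_mono h.1
    induction n generalizing T with
    | zero =>
      obtain rfl : T = ∅ := hT
      simp
    | succ n ih =>
      obtain ⟨T₁, h₁, T₂, h₂, hd, rfl⟩ := hT
      rw [mem_teSem_stepE] at h₁
      obtain ⟨t, hwt, hsrc, hsym, hinv, hψ, rfl⟩ := h₁
      have hsub₂ : T₂ ⊆ neighPM G v := fun x hx => hsub (Or.inr hx)
      obtain ⟨hm₂, hc₂⟩ := ih T₂ h₂ hsub₂
      have htm : t ∈ matchSet semVT G v q b ψ :=
        ⟨hsub (Or.inl rfl), hsym, hinv, hψ⟩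
      constructor
      · exact Set.union_subset (Set.singleton_subset_iff.2 htm) hm₂
      · rw [Set.encard_union_eq (Set.disjoint_iff_inter_eq_empty.2 hd), hc₂,
          Set.encard_singleton]
        push_cast
        ring
  · intro hn
    obtain ⟨T, hTsub, hTc⟩ := Set.exists_subset_encard_eq hn
    have key : ∀ (m : ℕ) (T : Set STriple), T ⊆ matchSet semVT G v q b ψ → T.encard = m →
        T ∈ teSem semVT G v (powE m (stepE b q ψ)) := by
      intro m
      induction m with
      | zero =>
        intro T hsub hTc
        obtain rfl : T = ∅ := Set.encard_eq_zero.1 hTc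
        exact rfl
      | succ n ih =>
        intro T hTsub hTc
        have hne : T.Nonempty := Set.nonempty_of_encard_ne_zero (by rw [hTc]; simp)
        obtain ⟨t, ht⟩ := hne
        have hdiff : (T \ {t}).encard = n := by
          have h1 := Set.encard_diff_singleton_add_one ht
          rw [hTc] at h1
          have h2 : ((n+1 : ℕ) : ℕ∞) = (n : ℕ∞) + 1 := by push_cast; ring
          rw [h2] at h1
          exact WithTop.add_right_cancel (by exact ENat.one_ne_top) h1
        have htm := hTsub ht
        refine ⟨{t}, ?_, T \ {t}, ?_, ?_, ?_⟩
        · rw [mem_teSem_stepE]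
          exact ⟨t, mem_neighPM_wellTyped G htm.1, mem_neighPM_src G htm.1, htm.2.1, htm.2.2.1,
            htm.2.2.2, rfl⟩
        · exact ih (T \ {t}) (fun x hx => hTsub hx.1) hdiff
        · ext x
          simp only [Set.mem_inter_iff, Set.mem_singleton_iff, Set.mem_diff,
            Set.mem_empty_iff_false, iff_false]
          rintro ⟨rfl, -, hx⟩
          exact hx rfl
        · ext x
          simp only [Set.mem_union, Set.mem_singleton_iff, Set.mem_diff]
          constructor
          · intro hx
            by_cases hxt : x = t
            · exact Or.inl hxt
            · exact Or.inr ⟨hx, hxt⟩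
          · rintro (rfl | ⟨hx, -⟩)
            · exact ht
            · exact hx
    exact ⟨T, key n T hTsub hTc, fun x hx => (hTsub hx).1⟩

lemma cntSh_iff (n : ℕ) (b : Bool) (q : PK) (ψ : ShExShape VT) (v : NV) :
    shexSat semVT G v (cntSh n b q ψ) ↔ (n : ℕ∞) ≤ (matchSet semVT G v q b ψ).encard := by
  rw [cntSh, shexSat_neighOpen_iff, powE_char]

lemma matchSet_encard (v : NV) (q : PK) (b : Bool) (ψ : ShExShape VT) (Ψ : NV → Prop)
    (hψ : ∀ y, dirSem (tripleRel G q) b v y → (shexSat semVT G y ψ ↔ Ψ y)) :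
    (matchSet semVT G v q b ψ).encard = {y | dirSem (tripleRel G q) b v y ∧ Ψ y}.encard := by
  have himg : STriple.tgt '' matchSet semVT G v q b ψ = {y | dirSem (tripleRel G q) b v y ∧ Ψ y} := by
    ext y
    simp only [Set.mem_image, Set.mem_setOf_eq]
    constructor
    · rintro ⟨t, ⟨htm, hsym, hinv, hψ'⟩, rfl⟩
      have hdir : dirSem (tripleRel G q) b v t.tgt := by
        cases b
        · have := mem_neighPM_of_false G htm hinv
          rw [hsym] at this
          exact this
        · have := mem_neighPM_of_true G htm hinv
          rw [hsym] at this
          exact this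
      exact ⟨hdir, (hψ t.tgt hdir).1 hψ'⟩
    · rintro ⟨hdir, hΨ⟩
      refine ⟨⟨v, q, b, y⟩, ⟨?_, rfl, rfl, (hψ y hdir).2 hΨ⟩, rfl⟩
      cases b
      · exact mk_mem_neighPM_false G hdir
      · exact mk_mem_neighPM_true G hdir
  rw [← himg]
  rw [Set.InjOn.encard_image]
  rintro t ⟨htm, hsym, hinv, -⟩ t' ⟨htm', hsym', hinv', -⟩ htgt
  obtain ⟨s1, y1, i1, g1⟩ := t
  obtain ⟨s2, y2, i2, g2⟩ := t'
  have e1 : s1 = v := mem_neighPM_src G htm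
  have e2 : s2 = v := mem_neighPM_src G htm'
  simp only at hsym hsym' hinv hinv' htgt
  subst e1; subst e2; subst hsym; subst hsym'; subst hinv; subst hinv'; subst htgt
  rfl

end Count
/-! ### Part 6: closedness and exact content types -/

def deadE {VT : Type} : TExpr VT := .fwd (Sum.inl 0) sFalse

def altList {VT : Type} (l : List (TExpr VT)) : TExpr VT := l.foldr .alt deadE

noncomputable def closedE {VT : Type} (D : Finset GKey) (P : Finset GPred) : TExpr VT :=
  .seq (.star (altList ((D.toList.map Sum.inr).map fun q => .fwd q sTrue)))
       (.star (altList ((P.toList.map Sum.inl).map fun q => .fwd q sTrue)))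

noncomputable def closedSh {VT : Type} (D : Finset GKey) (P : Finset GPred) : ShExShape VT :=
  .neighHalf (closedE D P) ∅

def bigOr {VT : Type} (l : List (ShExShape VT)) : ShExShape VT := l.foldr .or sFalse

def keysOf {VT : Type} : CCType VT → Finset GKey
  | .emp => ∅
  | .single k _ => {k}
  | .band ν₁ ν₂ => keysOf ν₁ ∪ keysOf ν₂
  | .bor ν₁ ν₂ => keysOf ν₁ ∪ keysOf ν₂

def recDom (r : Set (GKey × GValue)) : Set GKey := Prod.fst '' r

noncomputable def Xsh {VT : Type} : CCType VT → Finset GKey → ShExShape VT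
  | .emp, D => if D = ∅ then sTrue else sFalse
  | .single k τ, D => if D = {k} then keyTypeSh k τ else sFalse
  | .band ν₁ ν₂, D => bigOr ((D.powerset ×ˢ D.powerset).toList.map
      (fun q => if q.1 ∪ q.2 = D then .and (Xsh ν₁ q.1) (Xsh ν₂ q.2) else sFalse))
  | .bor ν₁ ν₂, D => .or (Xsh ν₁ D) (Xsh ν₂ D)

noncomputable def CNsh {VT : Type} (ν : CCType VT) (P : Finset GPred) : ShExShape VT :=
  bigOr ((keysOf ν).powerset.toList.map (fun D => .and (Xsh ν D) (closedSh D P)))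

section Closed
variable {VT : Type} (semVT : VT → Set GValue) (G : CommonGraph)

lemma bigOr_iff (l : List (ShExShape VT)) (v : NV) :
    shexSat semVT G v (bigOr l) ↔ ∃ φ ∈ l, shexSat semVT G v φ := by
  induction l with
  | nil =>
    simp only [bigOr, List.foldr]
    refine iff_of_false (sFalse_not_sat semVT G v) (by simp)
  | cons φ l ih =>
    simp only [bigOr, List.foldr] at ih ⊢
    rw [show shexSat semVT G v (ShExShape.or φ (l.foldr ShExShape.or sFalse)) ↔
      (shexSat semVT G v φ ∨ shexSat semVT G v (l.foldr ShExShape.or sFalse)) from Iff.rfl, ih]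
    simp

lemma teSem_deadE (v : NV) : teSem semVT G v (deadE (VT := VT)) = ∅ := by
  ext T
  simp only [Set.mem_empty_iff_false, iff_false]
  rintro ⟨t, -, -, -, -, hψ, -⟩
  exact sFalse_not_sat semVT G t.tgt hψ

lemma teSem_altList (l : List (TExpr VT)) (v : NV) (T : Set STriple) :
    T ∈ teSem semVT G v (altList l) ↔ ∃ e ∈ l, T ∈ teSem semVT G v e := by
  induction l with
  | nil =>
    simp only [altList, List.foldr, teSem_deadE]
    simp
  | cons e l ih =>
    simp only [altList, List.foldr] at ih ⊢
    rw [show (T ∈ teSem semVT G v (TExpr.alt e (l.foldr TExpr.alt deadE)) ↔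
      (T ∈ teSem semVT G v e ∨ T ∈ teSem semVT G v (l.foldr TExpr.alt deadE))) from Iff.rfl, ih]
    simp

lemma star_altList_fwd_iff (l : List PK) (v : NV) (T : Set STriple) :
    T ∈ teSem semVT G v (.star (altList (l.map fun q => .fwd q sTrue))) ↔
      T.Finite ∧ ∀ t ∈ T, t.wellTyped ∧ t.src = v ∧ t.inv = false ∧ t.sym ∈ l := by
  rw [show (T ∈ teSem semVT G v (.star (altList (l.map fun q => .fwd q sTrue))) ↔
    T ∈ starSem (teSem semVT G v (altList (l.map fun q => .fwd q sTrue)))) from Iff.rfl,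
    starSem_singletons]
  · refine and_congr_right fun _ => forall₂_congr fun t ht => ?_
    rw [teSem_altList]
    constructor
    · rintro ⟨e, he, hmem⟩
      simp only [List.mem_map] at he
      obtain ⟨q, hq, rfl⟩ := he
      obtain ⟨t', hwt, hsrc, hsym, hinv, -, heq⟩ := hmem
      obtain rfl : t = t' := by
        have := Set.singleton_eq_singleton_iff.1 heq; exact this
      exact ⟨hwt, hsrc, hinv, hsym ▸ hq⟩
    · rintro ⟨hwt, hsrc, hinv, hsym⟩
      exact ⟨.fwd t.sym sTrue, List.mem_map.2 ⟨t.sym, hsym, rfl⟩,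
        t, hwt, hsrc, rfl, hinv, sTrue_sat semVT G _, rfl⟩
  · intro X hX
    rw [teSem_altList] at hX
    obtain ⟨e, he, hmem⟩ := hX
    simp only [List.mem_map] at he
    obtain ⟨q, hq, rfl⟩ := he
    obtain ⟨t', _, _, _, _, _, rfl⟩ := hmem
    exact ⟨t', rfl⟩

lemma closedSh_iff (D : Finset GKey) (P : Finset GPred) (v : NV) :
    shexSat semVT G v (closedSh (VT := VT) D P) ↔
      ∀ t ∈ neighPM G v, t.inv = false →
        ((∃ k ∈ D, t.sym = Sum.inr k) ∨ (∃ p ∈ P, t.sym = Sum.inl p)) := by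
  rw [closedSh, shexSat_neighHalf_iff]
  constructor
  · rintro ⟨T, hT, hsub, hrest⟩
    obtain ⟨T₁, h₁, T₂, h₂, hd, rfl⟩ := hT
    rw [star_altList_fwd_iff] at h₁ h₂
    intro t ht hinv
    by_cases htT : t ∈ T₁ ∪ T₂
    · rcases htT with h | h
      · obtain ⟨-, -, -, hsym⟩ := h₁.2 t h
        simp only [List.mem_map] at hsym
        obtain ⟨k, hk, hsk⟩ := hsym
        exact Or.inl ⟨k, by simpa using hk, hsk.symm⟩
      · obtain ⟨-, -, -, hsym⟩ := h₂.2 t h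
        simp only [List.mem_map] at hsym
        obtain ⟨p, hp, hsp⟩ := hsym
        exact Or.inr ⟨p, by simpa using hp, hsp.symm⟩
    · obtain ⟨hb, -⟩ := hrest t ht htT
      rw [hinv] at hb
      exact absurd hb (by simp)
  · intro h
    refine ⟨{t ∈ neighPM G v | t.inv = false ∧ ∃ k ∈ D, t.sym = Sum.inr k} ∪
      {t ∈ neighPM G v | t.inv = false ∧ ¬ (∃ k ∈ D, t.sym = Sum.inr k)},
      ⟨_, ?_, _, ?_, ?_, rfl⟩, ?_, ?_⟩
    · rw [star_altList_fwd_iff]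
      refine ⟨(neighPM_finite G v).subset (fun t ht => ht.1), ?_⟩
      rintro t ⟨ht, hinv, k, hk, hsym⟩
      exact ⟨mem_neighPM_wellTyped G ht, mem_neighPM_src G ht, hinv,
        List.mem_map.2 ⟨k, by simpa using hk, hsym.symm⟩⟩
    · rw [star_altList_fwd_iff]
      refine ⟨(neighPM_finite G v).subset (fun t ht => ht.1), ?_⟩
      rintro t ⟨ht, hinv, hnk⟩
      rcases h t ht hinv with hk | ⟨p, hp, hsym⟩
      · exact absurd hk hnk
      · exact ⟨mem_neighPM_wellTyped G ht, mem_neighPM_src G ht, hinv,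
          List.mem_map.2 ⟨p, by simpa using hp, hsym.symm⟩⟩
    · ext t
      simp only [Set.mem_inter_iff, Set.mem_setOf_eq, Set.mem_empty_iff_false, iff_false]
      rintro ⟨⟨-, -, hk⟩, -, -, hnk⟩
      exact hnk hk
    · rintro t (⟨ht, -⟩ | ⟨ht, -⟩) <;> exact ht
    · rintro t ht htn
      constructor
      · by_contra hb
        have hinv : t.inv = false := by
          cases hbb : t.inv
          · rfl
          · exact absurd hbb hb
        by_cases hk : ∃ k ∈ D, t.sym = Sum.inr k
        · exact htn (Or.inl ⟨ht, hinv, hk⟩)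
        · exact htn (Or.inr ⟨ht, hinv, hk⟩)
      · simp

lemma closedSh_node_iff (D : Finset GKey) (P : Finset GPred) (u : GNode) :
    shexSat semVT G (Sum.inl u) (closedSh (VT := VT) D P) ↔
      ((∀ k w, Triple.prop u k w ∈ G.triples → k ∈ D) ∧
       (∀ p w, Triple.edge u p w ∈ G.triples → p ∈ P)) := by
  rw [closedSh_iff]
  constructor
  · intro h
    constructor
    · intro k w hm
      have ht : (⟨Sum.inl u, Sum.inr k, false, Sum.inr w⟩ : STriple) ∈ neighPM G (Sum.inl u) :=
        mk_mem_neighPM_false G hm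
      rcases h _ ht rfl with ⟨k', hk', hsym⟩ | ⟨p, hp, hsym⟩
      · obtain rfl : k = k' := by simpa using hsym
        exact hk'
      · simp at hsym
    · intro p w hm
      have ht : (⟨Sum.inl u, Sum.inl p, false, Sum.inl w⟩ : STriple) ∈ neighPM G (Sum.inl u) :=
        mk_mem_neighPM_false G hm
      rcases h _ ht rfl with ⟨k', hk', hsym⟩ | ⟨p', hp', hsym⟩
      · simp at hsym
      · obtain rfl : p = p' := by simpa using hsym
        exact hp'
  · rintro ⟨hk, hp⟩ t ht hinv
    have hr := mem_neighPM_of_false G ht hinv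
    rcases hsym : t.sym with p | k
    · rw [hsym, tripleRel_pred_iff] at hr
      obtain ⟨u', c, hu', -, hm⟩ := hr
      obtain rfl : u = u' := by simpa using hu'
      exact Or.inr ⟨p, hp p c hm, rfl⟩
    · rw [hsym, tripleRel_key_iff] at hr
      obtain ⟨u', w, hu', -, hm⟩ := hr
      obtain rfl : u = u' := by simpa using hu'
      exact Or.inl ⟨k, hk k w hm, rfl⟩

end Closed
/-! ### Part 7: exact content types -/

section Exact
variable {VT : Type} (semVT : VT → Set GValue) (G : CommonGraph)

lemma ctSem_closed_props (ν : CCType VT) :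
    ∀ r ∈ ctSem semVT ν.toCT, r.Finite ∧ recDom r ⊆ ↑(keysOf ν) := by
  induction ν with
  | emp =>
    rintro r hr
    obtain rfl : r = ∅ := hr
    simp [recDom]
  | single k τ =>
    rintro r ⟨w, hτ, rfl⟩
    simp [recDom, keysOf]
  | band ν₁ ν₂ ih₁ ih₂ =>
    rintro r ⟨hrec, r₁, h₁, r₂, h₂, rfl⟩
    obtain ⟨hf₁, hd₁⟩ := ih₁ r₁ h₁
    obtain ⟨hf₂, hd₂⟩ := ih₂ r₂ h₂
    refine ⟨hf₁.union hf₂, ?_⟩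
    rw [recDom, Set.image_union]
    simp only [keysOf, Finset.coe_union]
    exact Set.union_subset_union hd₁ hd₂
  | bor ν₁ ν₂ ih₁ ih₂ =>
    rintro r (h | h)
    · obtain ⟨hf, hd⟩ := ih₁ r h
      exact ⟨hf, hd.trans (by simp [keysOf])⟩
    · obtain ⟨hf, hd⟩ := ih₂ r h
      exact ⟨hf, hd.trans (by simp [keysOf])⟩

lemma Xsh_iff (ν : CCType VT) (D : Finset GKey) (u : GNode) :
    shexSat semVT G (Sum.inl u) (Xsh ν D) ↔
      ∃ r ∈ ctSem semVT ν.toCT, r ⊆ content G u ∧ recDom r = ↑D := by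
  induction ν generalizing D with
  | emp =>
    by_cases hD : D = ∅
    · subst hD
      rw [show Xsh (CCType.emp (VT := VT)) ∅ = sTrue from by simp [Xsh]]
      refine iff_of_true (sTrue_sat semVT G _) ⟨∅, rfl, Set.empty_subset _, by simp [recDom]⟩
    · rw [show Xsh (CCType.emp (VT := VT)) D = sFalse from by simp [Xsh, hD]]
      refine iff_of_false (sFalse_not_sat semVT G _) ?_
      rintro ⟨r, hr, -, hdom⟩
      obtain rfl : r = ∅ := hr
      rw [recDom] at hdom
      simp only [Set.image_empty] at hdom
      exact hD (Finset.coe_injective (by simp [← hdom]))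
  | single k τ =>
    by_cases hD : D = {k}
    · subst hD
      rw [show Xsh (CCType.single k τ) ({k} : Finset GKey) = keyTypeSh k τ from by simp [Xsh]]
      rw [keyTypeSh_iff]
      constructor
      · rintro ⟨u', w, hu, hm, hτ⟩
        obtain rfl : u = u' := by simpa using hu
        exact ⟨{(k, w)}, ⟨w, hτ, rfl⟩, Set.singleton_subset_iff.2 hm, by simp [recDom]⟩
      · rintro ⟨r, ⟨w, hτ, rfl⟩, hsub, -⟩
        exact ⟨u, w, rfl, hsub rfl, hτ⟩
    · rw [show Xsh (CCType.single k τ) D = sFalse from by simp [Xsh, hD]]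
      refine iff_of_false (sFalse_not_sat semVT G _) ?_
      rintro ⟨r, ⟨w, hτ, rfl⟩, -, hdom⟩
      refine hD (Finset.coe_injective ?_)
      rw [← hdom]
      simp [recDom]
  | band ν₁ ν₂ ih₁ ih₂ =>
    rw [show Xsh (CCType.band ν₁ ν₂) D = bigOr ((D.powerset ×ˢ D.powerset).toList.map
      (fun q => if q.1 ∪ q.2 = D then .and (Xsh ν₁ q.1) (Xsh ν₂ q.2) else sFalse)) from rfl]
    rw [bigOr_iff]
    constructor
    · rintro ⟨φ, hφ, hsat⟩
      simp only [List.mem_map, Finset.mem_toList, Finset.mem_product, Finset.mem_powerset] at hφ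
      obtain ⟨⟨D₁, D₂⟩, ⟨hD₁, hD₂⟩, rfl⟩ := hφ
      by_cases hu : D₁ ∪ D₂ = D
      · rw [if_pos hu] at hsat
        obtain ⟨hs₁, hs₂⟩ : shexSat semVT G (Sum.inl u) (Xsh ν₁ D₁) ∧
            shexSat semVT G (Sum.inl u) (Xsh ν₂ D₂) := hsat
        obtain ⟨r₁, h₁, hsub₁, hdom₁⟩ := (ih₁ D₁).1 hs₁
        obtain ⟨r₂, h₂, hsub₂, hdom₂⟩ := (ih₂ D₂).1 hs₂
        refine ⟨r₁ ∪ r₂, ⟨(content_isRecord G u).subset (Set.union_subset hsub₁ hsub₂),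
          r₁, h₁, r₂, h₂, rfl⟩, Set.union_subset hsub₁ hsub₂, ?_⟩
        rw [recDom, Set.image_union, ← recDom, ← recDom, hdom₁, hdom₂, ← hu]
        simp
      · rw [if_neg hu] at hsat
        exact absurd hsat (sFalse_not_sat semVT G _)
    · rintro ⟨r, ⟨hrec, r₁, h₁, r₂, h₂, rfl⟩, hsub, hdom⟩
      obtain ⟨hf₁, -⟩ := ctSem_closed_props semVT ν₁ r₁ h₁
      obtain ⟨hf₂, -⟩ := ctSem_closed_props semVT ν₂ r₂ h₂
      have hdf₁ : (recDom r₁).Finite := hf₁.image _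
      have hdf₂ : (recDom r₂).Finite := hf₂.image _
      set D₁ := hdf₁.toFinset with hD₁def
      set D₂ := hdf₂.toFinset with hD₂def
      have hcoe₁ : (D₁ : Set GKey) = recDom r₁ := hdf₁.coe_toFinset
      have hcoe₂ : (D₂ : Set GKey) = recDom r₂ := hdf₂.coe_toFinset
      have hDD : D₁ ∪ D₂ = D := by
        refine Finset.coe_injective ?_
        rw [Finset.coe_union, hcoe₁, hcoe₂, ← hdom]
        simp [recDom, Set.image_union]
      have hsub₁ : D₁ ⊆ D := by rw [← hDD]; exact Finset.subset_union_left
      have hsub₂ : D₂ ⊆ D := by rw [← hDD]; exact Finset.subset_union_right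
      refine ⟨if (D₁ ∪ D₂ = D) then .and (Xsh ν₁ D₁) (Xsh ν₂ D₂) else sFalse, ?_, ?_⟩
      · simp only [List.mem_map, Finset.mem_toList, Finset.mem_product, Finset.mem_powerset]
        exact ⟨(D₁, D₂), ⟨hsub₁, hsub₂⟩, rfl⟩
      · rw [if_pos hDD]
        exact ⟨(ih₁ D₁).2 ⟨r₁, h₁, (Set.subset_union_left).trans hsub, hcoe₁.symm⟩,
          (ih₂ D₂).2 ⟨r₂, h₂, (Set.subset_union_right).trans hsub, hcoe₂.symm⟩⟩
  | bor ν₁ ν₂ ih₁ ih₂ =>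
    rw [show Xsh (CCType.bor ν₁ ν₂) D = .or (Xsh ν₁ D) (Xsh ν₂ D) from rfl]
    rw [show (shexSat semVT G (Sum.inl u) (ShExShape.or (Xsh ν₁ D) (Xsh ν₂ D)) ↔
      (shexSat semVT G (Sum.inl u) (Xsh ν₁ D) ∨ shexSat semVT G (Sum.inl u) (Xsh ν₂ D)))
      from Iff.rfl, ih₁, ih₂]
    constructor
    · rintro (⟨r, h, hs, hd⟩ | ⟨r, h, hs, hd⟩)
      · exact ⟨r, Or.inl h, hs, hd⟩
      · exact ⟨r, Or.inr h, hs, hd⟩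
    · rintro ⟨r, h | h, hs, hd⟩
      · exact Or.inl ⟨r, h, hs, hd⟩
      · exact Or.inr ⟨r, h, hs, hd⟩

lemma recDom_content_subset {u : GNode} {ν : CCType VT}
    (h : content G u ∈ ctSem semVT ν.toCT) : recDom (content G u) ⊆ ↑(keysOf ν) :=
  (ctSem_closed_props semVT ν _ h).2

lemma CNsh_iff (ν : CCType VT) (P : Finset GPred) (u : GNode) :
    shexSat semVT G (Sum.inl u) (CNsh ν P) ↔
      (content G u ∈ ctSem semVT ν.toCT ∧
        ∀ p w, Triple.edge u p w ∈ G.triples → p ∈ P) := by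
  rw [CNsh, bigOr_iff]
  constructor
  · rintro ⟨φ, hφ, hsat⟩
    simp only [List.mem_map, Finset.mem_toList, Finset.mem_powerset] at hφ
    obtain ⟨D, hD, rfl⟩ := hφ
    obtain ⟨hX, hC⟩ : shexSat semVT G (Sum.inl u) (Xsh ν D) ∧
        shexSat semVT G (Sum.inl u) (closedSh D P) := hsat
    rw [Xsh_iff] at hX
    rw [closedSh_node_iff] at hC
    obtain ⟨r, hr, hsub, hdom⟩ := hX
    obtain ⟨hkeys, hpreds⟩ := hC
    have hreq : content G u = r := by
      refine Set.Subset.antisymm ?_ hsub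
      rintro ⟨k, w⟩ hkw
      have hkD : k ∈ D := hkeys k w hkw
      have : k ∈ recDom r := by rw [hdom]; exact_mod_cast hkD
      obtain ⟨⟨k', w'⟩, hk'w', hk'⟩ := this
      simp only at hk'
      subst hk'
      obtain rfl : w' = w := (content_isRecord G u).2 _ w' w (hsub hk'w') hkw
      exact hk'w'
    rw [hreq]
    exact ⟨hr, hpreds⟩
  · rintro ⟨hν, hP⟩
    have hdf : (recDom (content G u)).Finite := (content_isRecord G u).1.image _
    set D := hdf.toFinset with hDdef
    have hcoe : (D : Set GKey) = recDom (content G u) := hdf.coe_toFinset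
    refine ⟨.and (Xsh ν D) (closedSh D P), ?_, ?_⟩
    · simp only [List.mem_map, Finset.mem_toList, Finset.mem_powerset]
      refine ⟨D, ?_, rfl⟩
      rw [← Finset.coe_subset, hcoe]
      exact recDom_content_subset semVT G hν
    · refine ⟨(Xsh_iff semVT G ν D u).2 ⟨content G u, hν, Set.Subset.rfl, hcoe.symm⟩,
        (closedSh_node_iff semVT G D P u).2 ⟨?_, fun p w hm => hP p w hm⟩⟩
      intro k w hm
      rw [← Finset.mem_coe, hcoe]
      exact ⟨(k, w), hm, rfl⟩

end Exact
/-! ### Part 8: translation of common shapes -/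

noncomputable def ALsh {VT : Type} : ℕ → OnePath VT → ShExShape VT
  | 0, _ => sTrue
  | n+1, .fwd f₁ p f₂ => .and (Fsh f₁) (cntSh (n+1) false (Sum.inl p) (Fsh f₂))
  | n+1, .bwd f₁ p f₂ => .and (Fsh f₁) (cntSh (n+1) true (Sum.inl p) (Fsh f₂))
  | n+1, .toKey f k => if n = 0 then .and (Fsh f) (hasKey k) else sFalse
  | n+1, .fromKey k f => cntSh (n+1) true (Sum.inr k) (Fsh f)

noncomputable def ALshV {VT : Type} : ℕ → OnePath VT → ShExShape VT
  | 0, _ => sTrue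
  | n+1, .fromKey k f => cntSh (n+1) true (Sum.inr k) (Fsh f)
  | _+1, _ => sFalse

noncomputable def TrN {VT : Type} : CShape VT → ShExShape VT
  | .exist (.base π) => Esh π false sTrue
  | .exist (.toKey π k) => Esh π false (hasKey k)
  | .exist (.fromKey k π) => oneB (Sum.inr k) (Esh π false sTrue)
  | .exist (.between k π k') => oneB (Sum.inr k) (Esh π false (hasKey k'))
  | .exist (.keyOnly k) => hasKey k
  | .atLeast n π₁ => ALsh n π₁
  | .atMost n π₁ => .not (ALsh (n+1) π₁)
  | .closedNode ν P => CNsh ν P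
  | .and φ₁ φ₂ => .and (TrN φ₁) (TrN φ₂)

noncomputable def TrV {VT : Type} : CShape VT → ShExShape VT
  | .exist (.base _) => sFalse
  | .exist (.toKey _ _) => sFalse
  | .exist (.fromKey k π) => oneB (Sum.inr k) (Esh π false sTrue)
  | .exist (.between k π k') => oneB (Sum.inr k) (Esh π false (hasKey k'))
  | .exist (.keyOnly _) => sFalse
  | .atLeast n π₁ => ALshV n π₁
  | .atMost n π₁ => .not (ALshV (n+1) π₁)
  | .closedNode _ _ => sFalse
  | .and φ₁ φ₂ => .and (TrV φ₁) (TrV φ₂)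

section Tr
variable {VT : Type} (semVT : VT → Set GValue) (G : CommonGraph)

lemma keyRel_iff (k : GKey) (a b : NV) :
    keyRel G k a b ↔ ∃ u w, a = Sum.inl u ∧ b = Sum.inr w ∧ Triple.prop u k w ∈ G.triples := by
  cases a <;> cases b <;> simp [keyRel]

lemma keyRel_eq_tripleRel (k : GKey) (a b : NV) :
    keyRel G k a b ↔ tripleRel G (Sum.inr k) a b := by
  cases a <;> cases b <;> simp [keyRel, tripleRel]

lemma one_sat_iff' (q : PK) (ψ : ShExShape VT) (v : NV) :
    shexSat semVT G v (one q ψ) ↔ ∃ y, tripleRel G q v y ∧ shexSat semVT G y ψ := by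
  rw [one_sat_iff]
  constructor
  · rintro ⟨t, ht, hinv, hsym, hψ⟩
    exact ⟨t.tgt, hsym ▸ mem_neighPM_of_false G ht hinv, hψ⟩
  · rintro ⟨y, hr, hψ⟩
    exact ⟨⟨v, q, false, y⟩, mk_mem_neighPM_false G hr, rfl, rfl, hψ⟩

lemma oneB_sat_iff' (q : PK) (ψ : ShExShape VT) (v : NV) :
    shexSat semVT G v (oneB q ψ) ↔ ∃ y, tripleRel G q y v ∧ shexSat semVT G y ψ := by
  rw [oneB_sat_iff]
  constructor
  · rintro ⟨t, ht, hinv, hsym, hψ⟩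
    exact ⟨t.tgt, hsym ▸ mem_neighPM_of_true G ht hinv, hψ⟩
  · rintro ⟨y, hr, hψ⟩
    exact ⟨⟨v, q, true, y⟩, mk_mem_neighPM_true G hr, rfl, rfl, hψ⟩

lemma hasKey_iff' (k : GKey) (v : NV) :
    shexSat semVT G v (hasKey (VT := VT) k) ↔ ∃ y, keyRel G k v y := by
  rw [hasKey_iff]
  constructor
  · rintro ⟨u, w, rfl, hm⟩
    exact ⟨Sum.inr w, hm⟩
  · rintro ⟨y, hy⟩
    rw [keyRel_iff] at hy
    obtain ⟨u, w, rfl, rfl, hm⟩ := hy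
    exact ⟨u, w, rfl, hm⟩

/-- `Esh π false sTrue` says: there is an outgoing `π`-path. -/
lemma Esh_exists_iff (π : BPath VT) (v : NV) (hv : NodeOK G v) :
    shexSat semVT G v (Esh π false sTrue) ↔ ∃ y, bpathSem semVT G π v y := by
  rw [Esh_iff semVT G π false sTrue (fun _ => True)
    (fun x _ => iff_of_true (sTrue_sat semVT G x) trivial) v hv]
  simp [dirSem]

/-- `Esh π false (hasKey k)` says: there is an outgoing `π`-path ending at a node with key `k`. -/
lemma Esh_exists_key_iff (π : BPath VT) (k : GKey) (v : NV) (hv : NodeOK G v) :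
    shexSat semVT G v (Esh π false (hasKey k)) ↔
      ∃ y z, bpathSem semVT G π v y ∧ keyRel G k y z := by
  rw [Esh_iff semVT G π false (hasKey k) (fun y => ∃ z, keyRel G k y z)
    (fun x _ => hasKey_iff' semVT G k x) v hv]
  simp only [dirSem]
  constructor
  · rintro ⟨y, h, z, hz⟩; exact ⟨y, z, h, hz⟩
  · rintro ⟨y, z, h, hz⟩; exact ⟨y, h, z, hz⟩

lemma onePath_set_fwd {f₁ : GFilter VT} {p : GPred} {f₂ : GFilter VT} {v : NV}
    (hf₁ : cfilterSem semVT G f₁ v v) :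
    {y | onePathSem semVT G (.fwd f₁ p f₂) v y} =
      {y | tripleRel G (Sum.inl p) v y ∧ cfilterSem semVT G f₂ y y} := by
  ext y
  simp only [Set.mem_setOf_eq]
  constructor
  · rintro ⟨c, c', h1, h2, h3⟩
    obtain ⟨rfl, -⟩ := cfilterSem_partial_id semVT G h1
    obtain ⟨rfl, -⟩ := cfilterSem_partial_id semVT G h3
    exact ⟨h2, h3⟩
  · rintro ⟨h2, h3⟩
    exact ⟨v, y, hf₁, h2, h3⟩

lemma onePath_set_fwd_empty {f₁ : GFilter VT} {p : GPred} {f₂ : GFilter VT} {v : NV}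
    (hf₁ : ¬ cfilterSem semVT G f₁ v v) :
    {y | onePathSem semVT G (.fwd f₁ p f₂) v y} = ∅ := by
  ext y
  simp only [Set.mem_setOf_eq, Set.mem_empty_iff_false, iff_false]
  rintro ⟨c, c', h1, -, -⟩
  obtain ⟨rfl, -⟩ := cfilterSem_partial_id semVT G h1
  exact hf₁ h1

lemma onePath_set_bwd {f₁ : GFilter VT} {p : GPred} {f₂ : GFilter VT} {v : NV}
    (hf₁ : cfilterSem semVT G f₁ v v) :
    {y | onePathSem semVT G (.bwd f₁ p f₂) v y} =
      {y | tripleRel G (Sum.inl p) y v ∧ cfilterSem semVT G f₂ y y} := by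
  ext y
  simp only [Set.mem_setOf_eq]
  constructor
  · rintro ⟨c, c', h1, h2, h3⟩
    obtain ⟨rfl, -⟩ := cfilterSem_partial_id semVT G h1
    obtain ⟨rfl, -⟩ := cfilterSem_partial_id semVT G h3
    exact ⟨h2, h3⟩
  · rintro ⟨h2, h3⟩
    exact ⟨v, y, hf₁, h2, h3⟩

lemma onePath_set_bwd_empty {f₁ : GFilter VT} {p : GPred} {f₂ : GFilter VT} {v : NV}
    (hf₁ : ¬ cfilterSem semVT G f₁ v v) :
    {y | onePathSem semVT G (.bwd f₁ p f₂) v y} = ∅ := by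
  ext y
  simp only [Set.mem_setOf_eq, Set.mem_empty_iff_false, iff_false]
  rintro ⟨c, c', h1, -, -⟩
  obtain ⟨rfl, -⟩ := cfilterSem_partial_id semVT G h1
  exact hf₁ h1

lemma onePath_set_fromKey {k : GKey} {f : GFilter VT} {v : NV} :
    {y | onePathSem semVT G (.fromKey k f) v y} =
      {y | tripleRel G (Sum.inr k) y v ∧ cfilterSem semVT G f y y} := by
  ext y
  simp only [Set.mem_setOf_eq]
  constructor
  · rintro ⟨c, h1, h2⟩
    obtain ⟨rfl, -⟩ := cfilterSem_partial_id semVT G h2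
    exact ⟨(keyRel_eq_tripleRel G k _ _).1 h1, h2⟩
  · rintro ⟨h1, h2⟩
    exact ⟨y, (keyRel_eq_tripleRel G k _ _).2 h1, h2⟩

lemma onePath_set_toKey {k : GKey} {f : GFilter VT} {v : NV}
    (hf : cfilterSem semVT G f v v) :
    {y | onePathSem semVT G (.toKey f k) v y} = {y | keyRel G k v y} := by
  ext y
  simp only [Set.mem_setOf_eq]
  constructor
  · rintro ⟨c, h1, h2⟩
    obtain ⟨rfl, -⟩ := cfilterSem_partial_id semVT G h1
    exact h2
  · intro h
    exact ⟨v, hf, h⟩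

lemma onePath_set_toKey_empty {k : GKey} {f : GFilter VT} {v : NV}
    (hf : ¬ cfilterSem semVT G f v v) :
    {y | onePathSem semVT G (.toKey f k) v y} = ∅ := by
  ext y
  simp only [Set.mem_setOf_eq, Set.mem_empty_iff_false, iff_false]
  rintro ⟨c, h1, -⟩
  obtain ⟨rfl, -⟩ := cfilterSem_partial_id semVT G h1
  exact hf h1

lemma not_cast_succ_le_zero (n : ℕ) : ¬ (((n+1 : ℕ) : ℕ∞) ≤ (0 : ℕ∞)) := by
  push_cast
  simp [ENat.add_one_le_iff]

/-- counting of outgoing `p`-edges with target filter, forward direction. -/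
lemma cnt_dir_iff (n : ℕ) (b : Bool) (q : PK) (f : GFilter VT) (v : NV)
    (hnode : ∀ y, dirSem (tripleRel G q) b v y → NodeOK G y) :
    shexSat semVT G v (cntSh n b q (Fsh f)) ↔
      (n : ℕ∞) ≤ {y | dirSem (tripleRel G q) b v y ∧ cfilterSem semVT G f y y}.encard := by
  rw [cntSh_iff, matchSet_encard semVT G v q b (Fsh f) (fun y => cfilterSem semVT G f y y)
    (fun y hy => Fsh_iff semVT G f y (hnode y hy))]

lemma ALsh_iff (n : ℕ) (op : OnePath VT) (v : NV) (hv : NodeOK G v) :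
    shexSat semVT G v (ALsh n op) ↔
      (n : ℕ∞) ≤ {y | onePathSem semVT G op v y}.encard := by
  match n, op with
  | 0, op =>
    rw [show ALsh 0 op = sTrue (VT := VT) from rfl]
    refine iff_of_true (sTrue_sat semVT G v) (by simp)
  | n+1, .fwd f₁ p f₂ =>
    rw [show ALsh (n+1) (OnePath.fwd f₁ p f₂) =
      .and (Fsh f₁) (cntSh (n+1) false (Sum.inl p) (Fsh f₂)) from rfl]
    rw [show (shexSat semVT G v (.and (Fsh f₁) (cntSh (n+1) false (Sum.inl p) (Fsh f₂))) ↔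
      (shexSat semVT G v (Fsh f₁) ∧ shexSat semVT G v (cntSh (n+1) false (Sum.inl p) (Fsh f₂))))
      from Iff.rfl, Fsh_iff semVT G f₁ v hv]
    have hnode : ∀ y, dirSem (tripleRel G (Sum.inl p)) false v y → NodeOK G y := by
      intro y hy
      simp only [dirSem] at hy
      rw [tripleRel_pred_iff] at hy
      obtain ⟨u, c, -, rfl, hm⟩ := hy
      exact ⟨c, rfl, Or.inr (Or.inl ⟨p, u, hm⟩)⟩
    rw [cnt_dir_iff semVT G (n+1) false (Sum.inl p) f₂ v hnode]
    by_cases hf₁ : cfilterSem semVT G f₁ v v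
    · rw [onePath_set_fwd semVT G hf₁]
      simp only [dirSem, hf₁, true_and]
    · rw [onePath_set_fwd_empty semVT G hf₁]
      simp only [hf₁, false_and, false_iff, Set.encard_empty]
      exact not_cast_succ_le_zero n
  | n+1, .bwd f₁ p f₂ =>
    rw [show ALsh (n+1) (OnePath.bwd f₁ p f₂) =
      .and (Fsh f₁) (cntSh (n+1) true (Sum.inl p) (Fsh f₂)) from rfl]
    rw [show (shexSat semVT G v (.and (Fsh f₁) (cntSh (n+1) true (Sum.inl p) (Fsh f₂))) ↔
      (shexSat semVT G v (Fsh f₁) ∧ shexSat semVT G v (cntSh (n+1) true (Sum.inl p) (Fsh f₂))))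
      from Iff.rfl, Fsh_iff semVT G f₁ v hv]
    have hnode : ∀ y, dirSem (tripleRel G (Sum.inl p)) true v y → NodeOK G y := by
      intro y hy
      simp only [dirSem] at hy
      rw [tripleRel_pred_iff] at hy
      obtain ⟨u, c, rfl, -, hm⟩ := hy
      exact ⟨u, rfl, Or.inl ⟨p, c, hm⟩⟩
    rw [cnt_dir_iff semVT G (n+1) true (Sum.inl p) f₂ v hnode]
    by_cases hf₁ : cfilterSem semVT G f₁ v v
    · rw [onePath_set_bwd semVT G hf₁]
      simp only [dirSem, hf₁, true_and]
    · rw [onePath_set_bwd_empty semVT G hf₁]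
      simp only [hf₁, false_and, false_iff, Set.encard_empty]
      exact not_cast_succ_le_zero n
  | 1, .toKey f k =>
    rw [show ALsh 1 (OnePath.toKey f k) = .and (Fsh f) (hasKey (VT := VT) k) from by
      simp [ALsh]]
    rw [show (shexSat semVT G v (.and (Fsh f) (hasKey k)) ↔
      (shexSat semVT G v (Fsh f) ∧ shexSat semVT G v (hasKey k))) from Iff.rfl,
      Fsh_iff semVT G f v hv, hasKey_iff']
    by_cases hf : cfilterSem semVT G f v v
    · rw [onePath_set_toKey semVT G hf]
      simp only [hf, true_and]
      rw [show ((1 : ℕ) : ℕ∞) = 1 from by push_cast; rfl, Set.one_le_encard_iff_nonempty]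
      exact Iff.symm Set.nonempty_def
    · rw [onePath_set_toKey_empty semVT G hf]
      simp only [hf, false_and, false_iff, Set.encard_empty]
      exact not_cast_succ_le_zero 0
  | n+2, .toKey f k =>
    rw [show ALsh (n+2) (OnePath.toKey f k) = sFalse (VT := VT) from by simp [ALsh]]
    refine iff_of_false (sFalse_not_sat semVT G v) ?_
    intro hn
    have h2 : (1 : ℕ∞) < {y | onePathSem semVT G (.toKey f k) v y}.encard := by
      refine lt_of_lt_of_le ?_ hn
      rw [show ((n+2 : ℕ) : ℕ∞) = ((n : ℕ∞) + 2) from by push_cast; ring]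
      exact lt_of_lt_of_le (by norm_num) le_add_self
    obtain ⟨a, b, ha, hb, hab⟩ := Set.one_lt_encard_iff.1 h2
    obtain ⟨c, hc1, hc2⟩ := ha
    obtain ⟨c', hc1', hc2'⟩ := hb
    obtain ⟨rfl, -⟩ := cfilterSem_partial_id semVT G hc1
    obtain ⟨rfl, -⟩ := cfilterSem_partial_id semVT G hc1'
    rw [keyRel_iff] at hc2 hc2'
    obtain ⟨u, w, rfl, rfl, hm⟩ := hc2
    obtain ⟨u', w', hu, rfl, hm'⟩ := hc2'
    obtain rfl : u = u' := by simpa using hu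
    obtain rfl : w = w' := G.functional u k w w' hm hm'
    exact hab rfl
  | n+1, .fromKey k f =>
    rw [show ALsh (n+1) (OnePath.fromKey k f) = cntSh (n+1) true (Sum.inr k) (Fsh f) from rfl]
    have hnode : ∀ y, dirSem (tripleRel G (Sum.inr k)) true v y → NodeOK G y := by
      intro y hy
      simp only [dirSem] at hy
      rw [tripleRel_key_iff] at hy
      obtain ⟨u, w, rfl, -, hm⟩ := hy
      exact ⟨u, rfl, Or.inr (Or.inr ⟨k, w, hm⟩)⟩
    rw [cnt_dir_iff semVT G (n+1) true (Sum.inr k) f v hnode, onePath_set_fromKey]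
    simp only [dirSem]

lemma ALshV_iff (n : ℕ) (op : OnePath VT) (w : GValue) :
    shexSat semVT G (Sum.inr w) (ALshV n op) ↔
      (n : ℕ∞) ≤ {y | onePathSem semVT G op (Sum.inr w) y}.encard := by
  have hval : ∀ (f : GFilter VT) (c : NV), ¬ cfilterSem semVT G f (Sum.inr w) c := by
    intro f c h
    obtain ⟨-, u, hu, -⟩ := cfilterSem_partial_id semVT G h
    simp at hu
  match n, op with
  | 0, op =>
    rw [show ALshV 0 op = sTrue (VT := VT) from rfl]
    refine iff_of_true (sTrue_sat semVT G _) (by simp)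
  | n+1, .fwd f₁ p f₂ =>
    rw [show ALshV (n+1) (OnePath.fwd f₁ p f₂) = sFalse (VT := VT) from rfl]
    refine iff_of_false (sFalse_not_sat semVT G _) ?_
    have : {y | onePathSem semVT G (.fwd f₁ p f₂) (Sum.inr w) y} = ∅ := by
      ext y
      simp only [Set.mem_setOf_eq, Set.mem_empty_iff_false, iff_false]
      rintro ⟨c, c', h1, -, -⟩
      exact hval f₁ c h1
    rw [this, Set.encard_empty]
    exact not_cast_succ_le_zero n
  | n+1, .bwd f₁ p f₂ =>
    rw [show ALshV (n+1) (OnePath.bwd f₁ p f₂) = sFalse (VT := VT) from rfl]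
    refine iff_of_false (sFalse_not_sat semVT G _) ?_
    have : {y | onePathSem semVT G (.bwd f₁ p f₂) (Sum.inr w) y} = ∅ := by
      ext y
      simp only [Set.mem_setOf_eq, Set.mem_empty_iff_false, iff_false]
      rintro ⟨c, c', h1, -, -⟩
      exact hval f₁ c h1
    rw [this, Set.encard_empty]
    exact not_cast_succ_le_zero n
  | n+1, .toKey f k =>
    rw [show ALshV (n+1) (OnePath.toKey f k) = sFalse (VT := VT) from rfl]
    refine iff_of_false (sFalse_not_sat semVT G _) ?_
    have : {y | onePathSem semVT G (.toKey f k) (Sum.inr w) y} = ∅ := by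
      ext y
      simp only [Set.mem_setOf_eq, Set.mem_empty_iff_false, iff_false]
      rintro ⟨c, h1, -⟩
      exact hval f c h1
    rw [this, Set.encard_empty]
    exact not_cast_succ_le_zero n
  | n+1, .fromKey k f =>
    rw [show ALshV (n+1) (OnePath.fromKey k f) = cntSh (n+1) true (Sum.inr k) (Fsh f) from rfl]
    have hnode : ∀ y, dirSem (tripleRel G (Sum.inr k)) true (Sum.inr w) y → NodeOK G y := by
      intro y hy
      simp only [dirSem] at hy
      rw [tripleRel_key_iff] at hy
      obtain ⟨u, w', rfl, -, hm⟩ := hy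
      exact ⟨u, rfl, Or.inr (Or.inr ⟨k, w', hm⟩)⟩
    rw [cnt_dir_iff semVT G (n+1) true (Sum.inr k) f _ hnode, onePath_set_fromKey]
    simp only [dirSem]

lemma encard_not_succ_le_iff (s : Set NV) (n : ℕ) :
    ¬ (((n+1 : ℕ) : ℕ∞) ≤ s.encard) ↔ s.encard ≤ (n : ℕ∞) := by
  constructor
  · intro h
    push_cast at h
    exact Order.le_of_lt_add_one (lt_of_not_ge h)
  · intro h hle
    have := le_trans hle h
    rw [Nat.cast_le] at this
    omega

end Tr
/-! ### Part 9: correctness of the shape translations -/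

section TrCorrect
variable {VT : Type} (semVT : VT → Set GValue) (G : CommonGraph)

lemma keyRel_nodeOK {k : GKey} {c v : NV} (h : keyRel G k c v) : NodeOK G c := by
  rw [keyRel_iff] at h
  obtain ⟨u, w, rfl, -, hm⟩ := h
  exact ⟨u, rfl, Or.inr (Or.inr ⟨k, w, hm⟩)⟩

lemma fromKey_tr_iff (k : GKey) (π : BPath VT) (v : NV) :
    shexSat semVT G v (oneB (Sum.inr k) (Esh π false sTrue)) ↔
      cshapeSat semVT G v (.exist (.fromKey k π)) := by
  rw [oneB_sat_iff']
  constructor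
  · rintro ⟨y, hr, hE⟩
    have hk : keyRel G k y v := (keyRel_eq_tripleRel G k _ _).2 hr
    obtain ⟨z, hz⟩ := (Esh_exists_iff semVT G π y (keyRel_nodeOK G hk)).1 hE
    exact ⟨z, y, hk, hz⟩
  · rintro ⟨v', c, hk, hb⟩
    exact ⟨c, (keyRel_eq_tripleRel G k _ _).1 hk,
      (Esh_exists_iff semVT G π c (keyRel_nodeOK G hk)).2 ⟨v', hb⟩⟩

lemma between_tr_iff (k : GKey) (π : BPath VT) (k' : GKey) (v : NV) :
    shexSat semVT G v (oneB (Sum.inr k) (Esh π false (hasKey k'))) ↔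
      cshapeSat semVT G v (.exist (.between k π k')) := by
  rw [oneB_sat_iff']
  constructor
  · rintro ⟨y, hr, hE⟩
    have hk : keyRel G k y v := (keyRel_eq_tripleRel G k _ _).2 hr
    obtain ⟨z, z', hz, hz'⟩ := (Esh_exists_key_iff semVT G π k' y (keyRel_nodeOK G hk)).1 hE
    exact ⟨z', y, z, hk, hz, hz'⟩
  · rintro ⟨v', c, c', hk, hb, hk'⟩
    exact ⟨c, (keyRel_eq_tripleRel G k _ _).1 hk,
      (Esh_exists_key_iff semVT G π k' c (keyRel_nodeOK G hk)).2 ⟨c', v', hb, hk'⟩⟩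

lemma TrN_iff (φ : CShape VT) (v : NV) (hv : NodeOK G v) :
    shexSat semVT G v (TrN φ) ↔ cshapeSat semVT G v φ := by
  induction φ with
  | exist π =>
    cases π with
    | base π =>
      rw [show TrN (.exist (.base π)) = Esh π false sTrue from rfl,
        Esh_exists_iff semVT G π v hv]
      exact Iff.rfl
    | toKey π k =>
      rw [show TrN (.exist (.toKey π k)) = Esh π false (hasKey k) from rfl,
        Esh_exists_key_iff semVT G π k v hv]
      constructor
      · rintro ⟨y, z, hb, hk⟩
        exact ⟨z, y, hb, hk⟩
      · rintro ⟨z, y, hb, hk⟩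
        exact ⟨y, z, hb, hk⟩
    | fromKey k π =>
      exact fromKey_tr_iff semVT G k π v
    | between k π k' =>
      exact between_tr_iff semVT G k π k' v
    | keyOnly k =>
      rw [show TrN (.exist (.keyOnly k)) = hasKey (VT := VT) k from rfl, hasKey_iff']
      exact Iff.rfl
  | atLeast n op =>
    rw [show TrN (.atLeast n op) = ALsh n op from rfl, ALsh_iff semVT G n op v hv]
    exact Iff.rfl
  | atMost n op =>
    rw [show TrN (.atMost n op) = .not (ALsh (n+1) op) from rfl,
      show (shexSat semVT G v (.not (ALsh (n+1) op)) ↔ ¬ shexSat semVT G v (ALsh (n+1) op))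
        from Iff.rfl,
      ALsh_iff semVT G (n+1) op v hv, encard_not_succ_le_iff]
    exact Iff.rfl
  | closedNode ν P =>
    obtain ⟨u, rfl, hu⟩ := hv
    rw [show TrN (.closedNode ν P) = CNsh ν P from rfl, CNsh_iff]
    constructor
    · rintro ⟨h1, h2⟩
      refine ⟨⟨u, rfl, h1⟩, ?_⟩
      intro u' p w hu' hm
      obtain rfl : u = u' := by simpa using hu'
      exact h2 p w hm
    · rintro ⟨⟨u', hu', h1⟩, h2⟩
      obtain rfl : u = u' := by simpa using hu'
      exact ⟨h1, fun p w hm => h2 u p w rfl hm⟩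
  | and φ₁ φ₂ ih₁ ih₂ =>
    rw [show TrN (.and φ₁ φ₂) = .and (TrN φ₁) (TrN φ₂) from rfl,
      show (shexSat semVT G v (.and (TrN φ₁) (TrN φ₂)) ↔
        (shexSat semVT G v (TrN φ₁) ∧ shexSat semVT G v (TrN φ₂))) from Iff.rfl,
      ih₁, ih₂]
    exact Iff.rfl

lemma TrV_iff (φ : CShape VT) (w : GValue) :
    shexSat semVT G (Sum.inr w) (TrV φ) ↔ cshapeSat semVT G (Sum.inr w) φ := by
  induction φ with
  | exist π =>
    cases π with
    | base π =>
      rw [show TrV (.exist (.base π)) = sFalse (VT := VT) from rfl]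
      refine iff_of_false (sFalse_not_sat semVT G _) ?_
      rintro ⟨y, hb⟩
      obtain ⟨⟨u, hu, -⟩, -⟩ := bpathSem_nodes semVT G hb
      simp at hu
    | toKey π k =>
      rw [show TrV (.exist (.toKey π k)) = sFalse (VT := VT) from rfl]
      refine iff_of_false (sFalse_not_sat semVT G _) ?_
      rintro ⟨y, c, hb, -⟩
      obtain ⟨⟨u, hu, -⟩, -⟩ := bpathSem_nodes semVT G hb
      simp at hu
    | fromKey k π =>
      exact fromKey_tr_iff semVT G k π _
    | between k π k' =>
      exact between_tr_iff semVT G k π k' _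
    | keyOnly k =>
      rw [show TrV (.exist (.keyOnly k)) = sFalse (VT := VT) from rfl]
      refine iff_of_false (sFalse_not_sat semVT G _) ?_
      rintro ⟨y, hk⟩
      have hk' : keyRel G k (Sum.inr w) y := hk
      rw [keyRel_iff] at hk'
      obtain ⟨u, w', hu, -, -⟩ := hk'
      simp at hu
  | atLeast n op =>
    rw [show TrV (.atLeast n op) = ALshV n op from rfl, ALshV_iff semVT G n op w]
    exact Iff.rfl
  | atMost n op =>
    rw [show TrV (.atMost n op) = .not (ALshV (n+1) op) from rfl,
      show (shexSat semVT G (Sum.inr w) (.not (ALshV (n+1) op)) ↔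
        ¬ shexSat semVT G (Sum.inr w) (ALshV (n+1) op)) from Iff.rfl,
      ALshV_iff semVT G (n+1) op w, encard_not_succ_le_iff]
    exact Iff.rfl
  | closedNode ν P =>
    rw [show TrV (.closedNode ν P) = sFalse (VT := VT) from rfl]
    refine iff_of_false (sFalse_not_sat semVT G _) ?_
    rintro ⟨⟨u, hu, -⟩, -⟩
    simp at hu
  | and φ₁ φ₂ ih₁ ih₂ =>
    rw [show TrV (.and φ₁ φ₂) = .and (TrV φ₁) (TrV φ₂) from rfl,
      show (shexSat semVT G (Sum.inr w) (.and (TrV φ₁) (TrV φ₂)) ↔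
        (shexSat semVT G (Sum.inr w) (TrV φ₁) ∧ shexSat semVT G (Sum.inr w) (TrV φ₂)))
        from Iff.rfl,
      ih₁, ih₂]
    exact Iff.rfl

end TrCorrect
/-! ### Part 10: selectors -/

def tailSh {VT : Type} : Option GKey → ShExShape VT
  | none => sTrue
  | some k' => hasKey k'

def selTr {VT : Type} : CShape VT → ShExShape VT
  | .exist (.keyOnly k) => hasKey k
  | .exist (.base (.comp (.pred p) π)) => one (Sum.inl p) (Esh π false sTrue)
  | .exist (.toKey (.comp (.pred p) π) k') => one (Sum.inl p) (Esh π false (hasKey k'))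
  | .exist (.base (.comp (.inv (.pred p)) π)) => oneB (Sum.inl p) (Esh π false sTrue)
  | .exist (.toKey (.comp (.inv (.pred p)) π) k') => oneB (Sum.inl p) (Esh π false (hasKey k'))
  | .exist (.base (.comp (.filt (.keyIs k c)) π)) => .and (keyIsSh k c) (Esh π false sTrue)
  | .exist (.toKey (.comp (.filt (.keyIs k c)) π) k') =>
      .and (keyIsSh k c) (Esh π false (hasKey k'))
  | .exist (.base (.comp (.filt (.openCT (.single k τ))) π)) =>
      .and (keyTypeSh k τ) (Esh π false sTrue)
  | .exist (.toKey (.comp (.filt (.openCT (.single k τ))) π) k') =>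
      .and (keyTypeSh k τ) (Esh π false (hasKey k'))
  | .exist (.fromKey k π) => oneB (Sum.inr k) (Esh π false sTrue)
  | .exist (.between k π k') => oneB (Sum.inr k) (Esh π false (hasKey k'))
  | _ => sTrue

def selSimple {VT : Type} : CShape VT → ShExShape VT
  | .exist (.keyOnly k) => hasKey k
  | .exist (.base (.comp (.pred p) _)) => one (Sum.inl p) sTrue
  | .exist (.toKey (.comp (.pred p) _) _) => one (Sum.inl p) sTrue
  | .exist (.base (.comp (.inv (.pred p)) _)) => oneB (Sum.inl p) sTrue
  | .exist (.toKey (.comp (.inv (.pred p)) _) _) => oneB (Sum.inl p) sTrue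
  | .exist (.base (.comp (.filt (.keyIs k c)) _)) => keyIsSh k c
  | .exist (.toKey (.comp (.filt (.keyIs k c)) _) _) => keyIsSh k c
  | .exist (.base (.comp (.filt (.openCT (.single k _))) _)) => hasKey k
  | .exist (.toKey (.comp (.filt (.openCT (.single k _))) _) _) => hasKey k
  | .exist (.fromKey k _) => oneB (Sum.inr k) sTrue
  | .exist (.between k _ _) => oneB (Sum.inr k) sTrue
  | _ => .testC 0

def selIsVal {VT : Type} : CShape VT → Bool
  | .exist (.fromKey _ _) => true
  | .exist (.between _ _ _) => true
  | _ => false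

noncomputable def ctxTr {VT : Type} (s φ : CShape VT) : ShExShape VT :=
  cond (selIsVal s) (TrV φ) (TrN φ)

lemma selSimple_isSel {VT : Type} (s : CShape VT) : IsShExSelector (selSimple s) := by
  unfold selSimple
  split
  · exact Or.inr (Or.inr (Or.inl ⟨_, rfl⟩))
  · exact Or.inr (Or.inr (Or.inl ⟨_, rfl⟩))
  · exact Or.inr (Or.inr (Or.inl ⟨_, rfl⟩))
  · exact Or.inr (Or.inr (Or.inr ⟨_, rfl⟩))
  · exact Or.inr (Or.inr (Or.inr ⟨_, rfl⟩))
  · exact Or.inr (Or.inl ⟨_, _, rfl⟩)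
  · exact Or.inr (Or.inl ⟨_, _, rfl⟩)
  · exact Or.inr (Or.inr (Or.inl ⟨_, rfl⟩))
  · exact Or.inr (Or.inr (Or.inl ⟨_, rfl⟩))
  · exact Or.inr (Or.inr (Or.inr ⟨_, rfl⟩))
  · exact Or.inr (Or.inr (Or.inr ⟨_, rfl⟩))
  · exact Or.inl ⟨0, rfl⟩

section Sel
variable {VT : Type} (semVT : VT → Set GValue) (G : CommonGraph)

def tailP (k? : Option GKey) (y : NV) : Prop :=
  match k? with
  | none => True
  | some k' => ∃ z, keyRel G k' y z

lemma tailSh_iff (k? : Option GKey) (x : NV) :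
    shexSat semVT G x (tailSh k?) ↔ tailP G k? x := by
  cases k? with
  | none => exact iff_of_true (sTrue_sat semVT G x) trivial
  | some k' => exact hasKey_iff' semVT G k' x

lemma Esh_tail_iff (π : BPath VT) (k? : Option GKey) (x : NV) (hx : NodeOK G x) :
    shexSat semVT G x (Esh π false (tailSh k?)) ↔
      ∃ y, bpathSem semVT G π x y ∧ tailP G k? y := by
  rw [Esh_iff semVT G π false (tailSh k?) (tailP G k?)
    (fun z _ => tailSh_iff semVT G k? z) x hx]
  simp only [dirSem]

lemma cshape_ext_iff (π₀ : BPath VT) (k? : Option GKey) (v : NV) :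
    cshapeSat semVT G v (.exist (CPath.ext π₀ k?)) ↔
      ∃ c, bpathSem semVT G π₀ v c ∧ tailP G k? c := by
  cases k? with
  | none =>
    simp only [CPath.ext]
    constructor
    · rintro ⟨y, hy⟩; exact ⟨y, hy, trivial⟩
    · rintro ⟨c, hc, -⟩; exact ⟨c, hc⟩
  | some k' =>
    simp only [CPath.ext]
    constructor
    · rintro ⟨y, c, hb, hk⟩; exact ⟨c, hb, y, hk⟩
    · rintro ⟨c, hb, y, hk⟩; exact ⟨y, c, hb, hk⟩

lemma tripleRel_pred_nodeOK {p : GPred} {a b : NV} (h : tripleRel G (Sum.inl p) a b) :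
    NodeOK G a ∧ NodeOK G b := by
  rw [tripleRel_pred_iff] at h
  obtain ⟨u, c, rfl, rfl, hm⟩ := h
  exact ⟨⟨u, rfl, Or.inl ⟨p, c, hm⟩⟩, ⟨c, rfl, Or.inr (Or.inl ⟨p, u, hm⟩)⟩⟩

/-! #### `p · π` selectors -/

lemma pred_exact (p : GPred) (π : BPath VT) (k? : Option GKey) (v : NV) :
    shexSat semVT G v (one (Sum.inl p) (Esh π false (tailSh k?))) ↔
      cshapeSat semVT G v (.exist (CPath.ext (.comp (.pred p) π) k?)) := by
  rw [one_sat_iff', cshape_ext_iff]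
  constructor
  · rintro ⟨c, hr, hE⟩
    obtain ⟨y, hy, ht⟩ := (Esh_tail_iff semVT G π k? c (tripleRel_pred_nodeOK G hr).2).1 hE
    exact ⟨y, ⟨c, hr, hy⟩, ht⟩
  · rintro ⟨y, ⟨c, hr, hy⟩, ht⟩
    exact ⟨c, hr, (Esh_tail_iff semVT G π k? c (tripleRel_pred_nodeOK G hr).2).2 ⟨y, hy, ht⟩⟩

lemma pred_imp (p : GPred) (π : BPath VT) (k? : Option GKey) (v : NV)
    (h : cshapeSat semVT G v (.exist (CPath.ext (.comp (.pred p) π) k?))) :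
    shexSat semVT G v (one (Sum.inl p) (sTrue (VT := VT))) := by
  rw [cshape_ext_iff] at h
  obtain ⟨y, ⟨c, hr, -⟩, -⟩ := h
  exact (one_sat_iff' semVT G _ _ v).2 ⟨c, hr, sTrue_sat semVT G c⟩

lemma pred_ctx (p : GPred) (π : BPath VT) (k? : Option GKey) (v : NV)
    (h : cshapeSat semVT G v (.exist (CPath.ext (.comp (.pred p) π) k?))) : NodeOK G v := by
  rw [cshape_ext_iff] at h
  obtain ⟨y, ⟨c, hr, -⟩, -⟩ := h
  exact (tripleRel_pred_nodeOK G hr).1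

/-! #### `p⁻ · π` selectors -/

lemma ipred_exact (p : GPred) (π : BPath VT) (k? : Option GKey) (v : NV) :
    shexSat semVT G v (oneB (Sum.inl p) (Esh π false (tailSh k?))) ↔
      cshapeSat semVT G v (.exist (CPath.ext (.comp (.inv (.pred p)) π) k?)) := by
  rw [oneB_sat_iff', cshape_ext_iff]
  constructor
  · rintro ⟨c, hr, hE⟩
    obtain ⟨y, hy, ht⟩ := (Esh_tail_iff semVT G π k? c (tripleRel_pred_nodeOK G hr).1).1 hE
    exact ⟨y, ⟨c, hr, hy⟩, ht⟩
  · rintro ⟨y, ⟨c, hr, hy⟩, ht⟩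
    exact ⟨c, hr, (Esh_tail_iff semVT G π k? c (tripleRel_pred_nodeOK G hr).1).2 ⟨y, hy, ht⟩⟩

lemma ipred_imp (p : GPred) (π : BPath VT) (k? : Option GKey) (v : NV)
    (h : cshapeSat semVT G v (.exist (CPath.ext (.comp (.inv (.pred p)) π) k?))) :
    shexSat semVT G v (oneB (Sum.inl p) (sTrue (VT := VT))) := by
  rw [cshape_ext_iff] at h
  obtain ⟨y, ⟨c, hr, -⟩, -⟩ := h
  exact (oneB_sat_iff' semVT G _ _ v).2 ⟨c, hr, sTrue_sat semVT G c⟩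

lemma ipred_ctx (p : GPred) (π : BPath VT) (k? : Option GKey) (v : NV)
    (h : cshapeSat semVT G v (.exist (CPath.ext (.comp (.inv (.pred p)) π) k?))) : NodeOK G v := by
  rw [cshape_ext_iff] at h
  obtain ⟨y, ⟨c, hr, -⟩, -⟩ := h
  exact (tripleRel_pred_nodeOK G hr).2

/-! #### `(k:c) · π` selectors -/

lemma keyis_exact (k : GKey) (c : GValue) (π : BPath VT) (k? : Option GKey) (v : NV) :
    shexSat semVT G v (.and (keyIsSh k c) (Esh π false (tailSh k?))) ↔
      cshapeSat semVT G v (.exist (CPath.ext (.comp (.filt (.keyIs k c)) π) k?)) := by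
  rw [show (shexSat semVT G v (.and (keyIsSh k c) (Esh π false (tailSh k?))) ↔
    (shexSat semVT G v (keyIsSh k c) ∧ shexSat semVT G v (Esh π false (tailSh k?))))
    from Iff.rfl, keyIsSh_iff, cshape_ext_iff]
  constructor
  · rintro ⟨⟨u, rfl, hm⟩, hE⟩
    have hu : u ∈ nodesSet G := Or.inr (Or.inr ⟨k, c, hm⟩)
    obtain ⟨y, hy, ht⟩ := (Esh_tail_iff semVT G π k? _ ⟨u, rfl, hu⟩).1 hE
    exact ⟨y, ⟨Sum.inl u, ⟨rfl, u, rfl, hu, hm⟩, hy⟩, ht⟩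
  · rintro ⟨y, ⟨m, hf, hy⟩, ht⟩
    have hf' : cfilterSem semVT G (.keyIs k c) v m := hf
    obtain ⟨heq, hnode⟩ := cfilterSem_partial_id semVT G hf'
    subst heq
    obtain ⟨-, u, rfl, hu, hm⟩ := hf'
    exact ⟨⟨u, rfl, hm⟩, (Esh_tail_iff semVT G π k? _ ⟨u, rfl, hu⟩).2 ⟨y, hy, ht⟩⟩

lemma keyis_imp (k : GKey) (c : GValue) (π : BPath VT) (k? : Option GKey) (v : NV)
    (h : cshapeSat semVT G v (.exist (CPath.ext (.comp (.filt (.keyIs k c)) π) k?))) :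
    shexSat semVT G v (keyIsSh (VT := VT) k c) := by
  rw [cshape_ext_iff] at h
  obtain ⟨y, ⟨m, hf, -⟩, -⟩ := h
  have hf' : cfilterSem semVT G (.keyIs k c) v m := hf
  obtain ⟨-, u, rfl, -, hm⟩ := hf'
  exact (keyIsSh_iff semVT G k c _).2 ⟨u, rfl, hm⟩

lemma keyis_ctx (k : GKey) (c : GValue) (π : BPath VT) (k? : Option GKey) (v : NV)
    (h : cshapeSat semVT G v (.exist (CPath.ext (.comp (.filt (.keyIs k c)) π) k?))) :
    NodeOK G v := by
  rw [cshape_ext_iff] at h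
  obtain ⟨y, ⟨m, hf, -⟩, -⟩ := h
  exact (cfilterSem_partial_id semVT G (show cfilterSem semVT G (.keyIs k c) v m from hf)).2

/-! #### `({k:τ}&⊤) · π` selectors -/

lemma single_exact (k : GKey) (τ : VT) (π : BPath VT) (k? : Option GKey) (v : NV) :
    shexSat semVT G v (.and (keyTypeSh k τ) (Esh π false (tailSh k?))) ↔
      cshapeSat semVT G v
        (.exist (CPath.ext (.comp (.filt (.openCT (.single k τ))) π) k?)) := by
  rw [show (shexSat semVT G v (.and (keyTypeSh k τ) (Esh π false (tailSh k?))) ↔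
    (shexSat semVT G v (keyTypeSh k τ) ∧ shexSat semVT G v (Esh π false (tailSh k?))))
    from Iff.rfl, keyTypeSh_iff, cshape_ext_iff]
  constructor
  · rintro ⟨⟨u, w, rfl, hm, hτ⟩, hE⟩
    have hu : u ∈ nodesSet G := Or.inr (Or.inr ⟨k, w, hm⟩)
    obtain ⟨y, hy, ht⟩ := (Esh_tail_iff semVT G π k? _ ⟨u, rfl, hu⟩).1 hE
    refine ⟨y, ⟨Sum.inl u, ⟨rfl, u, rfl, hu, ?_⟩, hy⟩, ht⟩
    exact (openCT_sem_iff semVT G (.single k τ) u).2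
      ⟨{(k, w)}, ⟨w, hτ, rfl⟩, Set.singleton_subset_iff.2 hm⟩
  · rintro ⟨y, ⟨m, hf, hy⟩, ht⟩
    have hf' : cfilterSem semVT G (.openCT (.single k τ)) v m := hf
    obtain ⟨heq, hnode⟩ := cfilterSem_partial_id semVT G hf'
    subst heq
    obtain ⟨-, u, rfl, hu, hct⟩ := hf'
    obtain ⟨r, ⟨w, hτ, rfl⟩, hsub⟩ := (openCT_sem_iff semVT G (.single k τ) u).1 hct
    exact ⟨⟨u, w, rfl, hsub rfl, hτ⟩, (Esh_tail_iff semVT G π k? _ ⟨u, rfl, hu⟩).2 ⟨y, hy, ht⟩⟩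

lemma single_imp (k : GKey) (τ : VT) (π : BPath VT) (k? : Option GKey) (v : NV)
    (h : cshapeSat semVT G v (.exist (CPath.ext (.comp (.filt (.openCT (.single k τ))) π) k?))) :
    shexSat semVT G v (hasKey (VT := VT) k) := by
  rw [cshape_ext_iff] at h
  obtain ⟨y, ⟨m, hf, -⟩, -⟩ := h
  have hf' : cfilterSem semVT G (.openCT (.single k τ)) v m := hf
  obtain ⟨-, u, rfl, -, hct⟩ := hf'
  obtain ⟨r, ⟨w, hτ, rfl⟩, hsub⟩ := (openCT_sem_iff semVT G (.single k τ) u).1 hct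
  exact (hasKey_iff semVT G k _).2 ⟨u, w, rfl, hsub rfl⟩

lemma single_ctx (k : GKey) (τ : VT) (π : BPath VT) (k? : Option GKey) (v : NV)
    (h : cshapeSat semVT G v (.exist (CPath.ext (.comp (.filt (.openCT (.single k τ))) π) k?))) :
    NodeOK G v := by
  rw [cshape_ext_iff] at h
  obtain ⟨y, ⟨m, hf, -⟩, -⟩ := h
  exact (cfilterSem_partial_id semVT G
    (show cfilterSem semVT G (.openCT (.single k τ)) v m from hf)).2

/-! #### `∃k`, `k⁻·π`, `k⁻·π·k'` selectors -/

lemma keyonly_exact (k : GKey) (v : NV) :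
    shexSat semVT G v (hasKey (VT := VT) k) ↔
      cshapeSat semVT G v (.exist (.keyOnly k)) :=
  (hasKey_iff' semVT G k v).trans Iff.rfl

lemma keyonly_ctx (k : GKey) (v : NV)
    (h : cshapeSat semVT G v (.exist (.keyOnly (VT := VT) k))) : NodeOK G v := by
  obtain ⟨y, hk⟩ := h
  exact keyRel_nodeOK G (show keyRel G k v y from hk)

lemma fromKey_imp (k : GKey) (π : BPath VT) (v : NV)
    (h : cshapeSat semVT G v (.exist (.fromKey k π))) :
    shexSat semVT G v (oneB (Sum.inr k) (sTrue (VT := VT))) := by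
  obtain ⟨y, c, hk, -⟩ := h
  exact (oneB_sat_iff' semVT G _ _ v).2
    ⟨c, (keyRel_eq_tripleRel G k _ _).1 hk, sTrue_sat semVT G c⟩

lemma fromKey_ctx (k : GKey) (π : BPath VT) (v : NV)
    (h : cshapeSat semVT G v (.exist (.fromKey k π))) : ∃ w, v = Sum.inr w := by
  obtain ⟨y, c, hk, -⟩ := h
  rw [keyRel_iff] at hk
  obtain ⟨u, w, -, rfl, -⟩ := hk
  exact ⟨w, rfl⟩

lemma between_imp (k : GKey) (π : BPath VT) (k' : GKey) (v : NV)
    (h : cshapeSat semVT G v (.exist (.between k π k'))) :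
    shexSat semVT G v (oneB (Sum.inr k) (sTrue (VT := VT))) := by
  obtain ⟨y, c, c', hk, -, -⟩ := h
  exact (oneB_sat_iff' semVT G _ _ v).2
    ⟨c, (keyRel_eq_tripleRel G k _ _).1 hk, sTrue_sat semVT G c⟩

lemma between_ctx (k : GKey) (π : BPath VT) (k' : GKey) (v : NV)
    (h : cshapeSat semVT G v (.exist (.between k π k'))) : ∃ w, v = Sum.inr w := by
  obtain ⟨y, c, c', hk, -, -⟩ := h
  rw [keyRel_iff] at hk
  obtain ⟨u, w, -, rfl, -⟩ := hk
  exact ⟨w, rfl⟩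

end Sel
/-! ### Part 11: schema translation -/

section Schema
variable {VT : Type} (semVT : VT → Set GValue) (G : CommonGraph)

lemma bridge_node (s φ : CShape VT)
    (hexact : ∀ v, shexSat semVT G v (selTr s) ↔ cshapeSat semVT G v s)
    (hctx : ∀ v, cshapeSat semVT G v s → NodeOK G v)
    (himp : ∀ v, cshapeSat semVT G v s → shexSat semVT G v (selSimple s))
    (hval : selIsVal s = false) :
    ((∀ v, cshapeSat semVT G v s → cshapeSat semVT G v φ) ↔
     (∀ v, shexSat semVT G v (selSimple s) →
        shexSat semVT G v (.or (.not (selTr s)) (ctxTr s φ)))) := by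
  have hctxTr : ctxTr s φ = TrN φ := by rw [ctxTr, hval]; rfl
  rw [hctxTr]
  constructor
  · intro h v hsel
    by_cases hts : shexSat semVT G v (selTr s)
    · have hc := (hexact v).1 hts
      exact Or.inr ((TrN_iff semVT G φ v (hctx v hc)).2 (h v hc))
    · exact Or.inl hts
  · intro h v hc
    rcases h v (himp v hc) with hnot | htr
    · exact absurd ((hexact v).2 hc) hnot
    · exact (TrN_iff semVT G φ v (hctx v hc)).1 htr

lemma bridge_val (s φ : CShape VT)
    (hexact : ∀ v, shexSat semVT G v (selTr s) ↔ cshapeSat semVT G v s)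
    (hctx : ∀ v, cshapeSat semVT G v s → ∃ w, v = Sum.inr w)
    (himp : ∀ v, cshapeSat semVT G v s → shexSat semVT G v (selSimple s))
    (hval : selIsVal s = true) :
    ((∀ v, cshapeSat semVT G v s → cshapeSat semVT G v φ) ↔
     (∀ v, shexSat semVT G v (selSimple s) →
        shexSat semVT G v (.or (.not (selTr s)) (ctxTr s φ)))) := by
  have hctxTr : ctxTr s φ = TrV φ := by rw [ctxTr, hval]; rfl
  rw [hctxTr]
  constructor
  · intro h v hsel
    by_cases hts : shexSat semVT G v (selTr s)
    · have hc := (hexact v).1 hts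
      obtain ⟨w, rfl⟩ := hctx v hc
      exact Or.inr ((TrV_iff semVT G φ w).2 (h _ hc))
    · exact Or.inl hts
  · intro h v hc
    rcases h v (himp v hc) with hnot | htr
    · exact absurd ((hexact v).2 hc) hnot
    · obtain ⟨w, rfl⟩ := hctx v hc
      exact (TrV_iff semVT G φ w).1 htr

lemma pair_iff (s φ : CShape VT) (hsel : IsCommonSelector s) :
    ((∀ v, cshapeSat semVT G v s → cshapeSat semVT G v φ) ↔
     (∀ v, shexSat semVT G v (selSimple s) →
        shexSat semVT G v (.or (.not (selTr s)) (ctxTr s φ)))) := by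
  rcases hsel with ⟨k, rfl⟩ | ⟨p, π, k?, rfl⟩ | ⟨p, π, k?, rfl⟩ | ⟨k, c, π, k?, rfl⟩ |
    ⟨k, τ, π, k?, rfl⟩ | ⟨k, π, rfl⟩ | ⟨k, π, k', rfl⟩
  · exact bridge_node semVT G _ φ (fun v => keyonly_exact semVT G k v)
      (fun v => keyonly_ctx semVT G k v) (fun v hc => (keyonly_exact semVT G k v).2 hc) rfl
  · cases k? with
    | none =>
      exact bridge_node semVT G _ φ (fun v => pred_exact semVT G p π none v)
        (fun v => pred_ctx semVT G p π none v) (fun v => pred_imp semVT G p π none v) rfl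
    | some k' =>
      exact bridge_node semVT G _ φ (fun v => pred_exact semVT G p π (some k') v)
        (fun v => pred_ctx semVT G p π (some k') v)
        (fun v => pred_imp semVT G p π (some k') v) rfl
  · cases k? with
    | none =>
      exact bridge_node semVT G _ φ (fun v => ipred_exact semVT G p π none v)
        (fun v => ipred_ctx semVT G p π none v) (fun v => ipred_imp semVT G p π none v) rfl
    | some k' =>
      exact bridge_node semVT G _ φ (fun v => ipred_exact semVT G p π (some k') v)
        (fun v => ipred_ctx semVT G p π (some k') v)
        (fun v => ipred_imp semVT G p π (some k') v) rfl
  · cases k? with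
    | none =>
      exact bridge_node semVT G _ φ (fun v => keyis_exact semVT G k c π none v)
        (fun v => keyis_ctx semVT G k c π none v) (fun v => keyis_imp semVT G k c π none v) rfl
    | some k' =>
      exact bridge_node semVT G _ φ (fun v => keyis_exact semVT G k c π (some k') v)
        (fun v => keyis_ctx semVT G k c π (some k') v)
        (fun v => keyis_imp semVT G k c π (some k') v) rfl
  · cases k? with
    | none =>
      exact bridge_node semVT G _ φ (fun v => single_exact semVT G k τ π none v)
        (fun v => single_ctx semVT G k τ π none v) (fun v => single_imp semVT G k τ π none v) rfl
    | some k' =>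
      exact bridge_node semVT G _ φ (fun v => single_exact semVT G k τ π (some k') v)
        (fun v => single_ctx semVT G k τ π (some k') v)
        (fun v => single_imp semVT G k τ π (some k') v) rfl
  · exact bridge_val semVT G _ φ (fun v => fromKey_tr_iff semVT G k π v)
      (fun v => fromKey_ctx semVT G k π v) (fun v => fromKey_imp semVT G k π v) rfl
  · exact bridge_val semVT G _ φ (fun v => between_tr_iff semVT G k π k' v)
      (fun v => between_ctx semVT G k π k' v) (fun v => between_imp semVT G k π k' v) rfl

end Schema
/-- For every common schema there exists an equivalent ShEx schema. -/
theorem common_schema_has_equivalent_shex_schema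
    (VT : Type) (semVT : VT → Set GValue) (S : CommonSchema VT) :
    ∃ S' : ShExSchema VT,
      ∀ G : CommonGraph, commonValid semVT S G ↔ shexValid semVT S' G := by
  classical
  refine ⟨⟨S.pairs.image (fun pr =>
    (selSimple pr.1, ShExShape.or (.not (selTr pr.1)) (ctxTr pr.1 pr.2))), ?_⟩, ?_⟩
  · intro pr' hpr'
    rw [Finset.mem_image] at hpr'
    obtain ⟨pr, -, rfl⟩ := hpr'
    exact selSimple_isSel pr.1
  · intro G
    constructor
    · intro h v' pr' hpr' hs
      rw [Finset.mem_image] at hpr'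
      obtain ⟨pr, hpr, rfl⟩ := hpr'
      exact (pair_iff semVT G pr.1 pr.2 (S.sel pr hpr)).1 (fun v hc => h v pr hpr hc) v' hs
    · intro h v pr hpr hc
      refine (pair_iff semVT G pr.1 pr.2 (S.sel pr hpr)).2 ?_ v hc
      intro v' hs
      exact h v' _ (Finset.mem_image_of_mem _ hpr) hs
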